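/- arXiv:2111.12020 — 9 statements merged into one kernel-verified Lean document; each statement's English description precedes it below -/
import Mathlib

section
/- Let X be a proper geodesic metric space, Ω ⊂ X open with X∖Ω ≠ ∅, and set u := −d_{X∖Ω}. Then: (i) the interior of X∖Ω is disjoint from the transport set with endpoints T_{u,e}; (ii) Ω ⊂ T_{u,e}; (iii) the set of final points 𝔟_u is contained in ∂Ω. -/
open Metric Set

/-- For `u = -d_{Ωᶜ}` in a proper geodesic space: the interior of `Ωᶜ`
is disjoint from the transport set with endpoints `T_{u,e}`, `Ω ⊆ T_{u,e}`, and the set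
of final points `𝔟_u` is contained in `∂Ω`. -/
theorem transport_set_of_boundary_distance {X : Type*} [MetricSpace X] [ProperSpace X]
    (hgeo : ∀ x y : X, ∃ γ : ℝ → X, γ 0 = x ∧ γ (dist x y) = y ∧
      ∀ s ∈ Set.Icc (0:ℝ) (dist x y), ∀ t ∈ Set.Icc (0:ℝ) (dist x y),
        dist (γ s) (γ t) = |s - t|)
    (Ω : Set X) (hΩ : IsOpen Ω) (hcne : Ωᶜ.Nonempty)
    (u : X → ℝ) (hu : ∀ x, u x = - infDist x Ωᶜ)
    (Γ : Set (X × X)) (hΓ : Γ = {p : X × X | u p.2 - u p.1 = dist p.1 p.2})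
    (R : Set (X × X)) (hR : R = Γ ∪ {p : X × X | (p.2, p.1) ∈ Γ})
    (T : Set X) (hT : T = {x : X | ∃ y : X, y ≠ x ∧ (x, y) ∈ R})
    (bu : Set X) (hbu : bu = {x : X | x ∈ T ∧ {y : X | (x, y) ∈ Γ} = {x}}) :
    interior Ωᶜ ∩ T = ∅ ∧ Ω ⊆ T ∧ bu ⊆ frontier Ω := by
  have hclosed : IsClosed Ωᶜ := hΩ.isClosed_compl
  -- helper: for x ∈ Ω there is a nearest point y in Ωᶜ, giving (x,y) ∈ Γ with y ≠ x
  have key : ∀ x ∈ Ω, ∃ y, y ≠ x ∧ (x, y) ∈ Γ := by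
    intro x hx
    obtain ⟨y, hyΩ, hyd⟩ := hclosed.exists_infDist_eq_dist hcne x
    refine ⟨y, fun h => hyΩ (h ▸ hx), ?_⟩
    rw [hΓ]
    simp only [mem_setOf_eq]
    rw [hu, hu, infDist_zero_of_mem hyΩ, hyd, dist_comm]
    ring
  -- helper: if x ∈ interior Ωᶜ and y ≠ x then infDist y Ωᶜ ≠ dist y x
  have no_int : ∀ x, x ∈ interior Ωᶜ → ∀ y, y ≠ x → infDist y Ωᶜ ≠ dist y x := by
    intro x hx y hyx heq
    obtain ⟨r, hrpos, hball⟩ := Metric.isOpen_iff.mp isOpen_interior x hx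
    have hball' : ball x r ⊆ Ωᶜ := hball.trans interior_subset
    obtain ⟨γ, h0, hD, hiso⟩ := hgeo y x
    set D := dist y x with hDdef
    have hDpos : 0 < D := dist_pos.mpr hyx
    set ε := min (r / 2) D with hε
    have hεpos : 0 < ε := lt_min (by linarith) hDpos
    have hεD : ε ≤ D := min_le_right _ _
    have ht : D - ε ∈ Set.Icc (0:ℝ) D := ⟨by linarith, by linarith⟩
    have htD : D ∈ Set.Icc (0:ℝ) D := ⟨hDpos.le, le_refl D⟩
    have h0m : (0:ℝ) ∈ Set.Icc (0:ℝ) D := ⟨le_refl 0, hDpos.le⟩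
    have hz : γ (D - ε) ∈ ball x r := by
      have h1 := hiso (D - ε) ht D htD
      rw [hD] at h1
      rw [mem_ball, h1]
      rw [abs_of_nonpos (by linarith)]
      have : ε ≤ r / 2 := min_le_left _ _
      linarith
    have hdyz : dist y (γ (D - ε)) = D - ε := by
      have h2 := hiso 0 h0m (D - ε) ht
      rw [h0] at h2
      rw [h2, abs_of_nonpos (by linarith)]
      ring
    have hle : infDist y Ωᶜ ≤ dist y (γ (D - ε)) :=
      infDist_le_dist_of_mem (hball' hz)
    rw [hdyz, heq] at hle
    linarith
  -- part (i)
  have part1 : interior Ωᶜ ∩ T = ∅ := by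
    rw [eq_empty_iff_forall_notMem]
    rintro x ⟨hxint, hxT⟩
    rw [hT] at hxT
    obtain ⟨y, hyx, hyR⟩ := hxT
    have hxΩc : x ∈ Ωᶜ := interior_subset hxint
    rw [hR] at hyR
    rcases hyR with hyΓ | hyΓ
    · rw [hΓ] at hyΓ
      simp only [mem_setOf_eq] at hyΓ
      rw [hu, hu, infDist_zero_of_mem hxΩc] at hyΓ
      have h1 : (0:ℝ) ≤ infDist y Ωᶜ := infDist_nonneg
      have h2 : (0:ℝ) ≤ dist x y := dist_nonneg
      have : dist x y = 0 := by linarith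
      exact hyx (dist_eq_zero.mp this).symm
    · rw [hΓ] at hyΓ
      simp only [mem_setOf_eq] at hyΓ
      rw [hu, hu, infDist_zero_of_mem hxΩc] at hyΓ
      exact no_int x hxint y hyx (by linarith)
  -- part (ii)
  have part2 : Ω ⊆ T := by
    intro x hx
    obtain ⟨y, hyx, hyΓ⟩ := key x hx
    rw [hT]
    exact ⟨y, hyx, by rw [hR]; exact Or.inl hyΓ⟩
  refine ⟨part1, part2, ?_⟩
  -- part (iii)
  intro x hx
  rw [hbu] at hx
  obtain ⟨hxT, hΓx⟩ := hx
  have hxnΩ : x ∉ Ω := by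
    intro hxΩ
    obtain ⟨y, hyx, hyΓ⟩ := key x hxΩ
    have : y ∈ ({x} : Set X) := hΓx ▸ (by exact hyΓ : y ∈ {y | (x, y) ∈ Γ})
    exact hyx this
  have hxnint : x ∉ interior Ωᶜ := by
    intro h
    exact absurd (part1 ▸ (⟨h, hxT⟩ : x ∈ interior Ωᶜ ∩ T)) (notMem_empty x)
  have hxcl : x ∈ closure Ω := by
    rw [← compl_compl (closure Ω), ← interior_compl]
    exact hxnint
  rw [frontier, hΩ.interior_eq]
  exact ⟨hxcl, hxnΩ⟩
end

section
/- Let X be a proper geodesic metric space that is not compact, and let Ω ⊂ X be open such that X∖Ω is nonempty and compact. Then there exists a unit-speed geodesic ray γ:[0,∞)→X (i.e. d(γ(s),γ(t))=|s−t| for all s,t ≥ 0) with γ(0) ∈ ∂Ω and γ(t) ∈ Ω for all t > 0. -/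
open Metric Set Filter Topology

/-- A noncompact proper geodesic space whose open set `Ω` has nonempty
compact complement contains a unit-speed geodesic ray starting on `∂Ω` and lying in `Ω`
for positive times. -/
theorem exists_ray_in_domain {X : Type*} [MetricSpace X] [ProperSpace X]
    (hgeo : ∀ x y : X, ∃ γ : ℝ → X, γ 0 = x ∧ γ (dist x y) = y ∧
      ∀ s ∈ Set.Icc (0:ℝ) (dist x y), ∀ t ∈ Set.Icc (0:ℝ) (dist x y),
        dist (γ s) (γ t) = |s - t|)
    (hnc : ¬ CompactSpace X)
    (Ω : Set X) (hΩ : IsOpen Ω) (hcne : Ωᶜ.Nonempty) (hccomp : IsCompact Ωᶜ) :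
    ∃ γ : ℝ → X,
      (∀ s t : ℝ, 0 ≤ s → 0 ≤ t → dist (γ s) (γ t) = |s - t|) ∧
      γ 0 ∈ frontier Ω ∧
      ∀ t : ℝ, 0 < t → γ t ∈ Ω := by
  obtain ⟨x₀, hx₀⟩ := hcne
  -- X is unbounded
  have hub : ∀ n : ℕ, ∃ z : X, (n : ℝ) < dist x₀ z := by
    intro n
    by_contra h
    push_neg at h
    apply hnc
    refine isCompact_univ_iff.mp ?_
    refine (isCompact_closedBall x₀ n).of_isClosed_subset isClosed_univ ?_
    intro z _
    simpa [mem_closedBall, dist_comm] using h z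
  choose y hy using hub
  have hΓex : ∀ n : ℕ, ∃ γ : ℝ → X, γ 0 = x₀ ∧ γ (dist x₀ (y n)) = y n ∧
      ∀ s ∈ Set.Icc (0:ℝ) (dist x₀ (y n)), ∀ t ∈ Set.Icc (0:ℝ) (dist x₀ (y n)),
        dist (γ s) (γ t) = |s - t| := fun n => hgeo x₀ (y n)
  choose Γ h0 _ hiso using hΓex
  obtain ⟨F, hF⟩ := Ultrafilter.exists_le (Filter.atTop : Filter ℕ)
  have hev : ∀ t : ℝ, ∀ᶠ n in (F : Filter ℕ), t ≤ dist x₀ (y n) := by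
    intro t
    apply hF
    filter_upwards [Filter.eventually_ge_atTop ⌈t⌉₊] with n hn
    calc t ≤ (⌈t⌉₊ : ℝ) := Nat.le_ceil t
      _ ≤ (n : ℝ) := by exact_mod_cast hn
      _ ≤ dist x₀ (y n) := (hy n).le
  have hdx : ∀ (n : ℕ) (t : ℝ), 0 ≤ t → t ≤ dist x₀ (y n) → dist x₀ (Γ n t) = t := by
    intro n t ht hn
    have := hiso n 0 ⟨le_refl 0, dist_nonneg⟩ t ⟨ht, hn⟩
    rw [h0 n] at this
    rw [this, abs_of_nonpos (by linarith)]
    ring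
  have hlim : ∀ t : ℝ, ∃ a : X, 0 ≤ t → Tendsto (fun n => Γ n t) (F : Filter ℕ) (𝓝 a) := by
    intro t
    rcases le_or_gt 0 t with ht | ht
    · have hsub : (closedBall x₀ t) ∈ Ultrafilter.map (fun n => Γ n t) F := by
        rw [Ultrafilter.mem_map]
        filter_upwards [hev t] with n hn
        simp only [mem_preimage, mem_closedBall, dist_comm]
        exact (hdx n t ht hn).le
      obtain ⟨a, _, ha⟩ := (isCompact_closedBall x₀ t).ultrafilter_le_nhds
        (Ultrafilter.map (fun n => Γ n t) F) (le_principal_iff.mpr hsub)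
      exact ⟨a, fun _ => ha⟩
    · exact ⟨x₀, fun h => absurd h (not_le.2 ht)⟩
  choose g hg using hlim
  have hdist : ∀ s t : ℝ, 0 ≤ s → 0 ≤ t → dist (g s) (g t) = |s - t| := by
    intro s t hs ht
    have h1 : Tendsto (fun n => dist (Γ n s) (Γ n t)) (F : Filter ℕ)
        (𝓝 (dist (g s) (g t))) := (hg s hs).dist (hg t ht)
    have h2 : Tendsto (fun n => dist (Γ n s) (Γ n t)) (F : Filter ℕ) (𝓝 |s - t|) := by
      refine Tendsto.congr' ?_ tendsto_const_nhds
      filter_upwards [hev s, hev t] with n h1' h2'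
      exact (hiso n s ⟨hs, h1'⟩ t ⟨ht, h2'⟩).symm
    exact tendsto_nhds_unique h1 h2
  have hg0 : g 0 = x₀ := by
    refine tendsto_nhds_unique (hg 0 le_rfl) ?_
    simp only [h0]
    exact tendsto_const_nhds
  -- bound for the complement
  obtain ⟨R, hR⟩ := hccomp.isBounded.subset_closedBall x₀
  set S : Set ℝ := {t : ℝ | 0 ≤ t ∧ g t ∈ Ωᶜ} with hS
  have h0S : (0 : ℝ) ∈ S := ⟨le_rfl, by rw [hg0]; exact hx₀⟩
  have hdg : ∀ t : ℝ, 0 ≤ t → dist x₀ (g t) = t := by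
    intro t ht
    rw [← hg0, hdist 0 t le_rfl ht, abs_of_nonpos (by linarith)]
    ring
  have hbdd : BddAbove S := by
    refine ⟨R, fun t ht => ?_⟩
    have := hR ht.2
    rw [mem_closedBall, dist_comm] at this
    rw [← hdg t ht.1]
    exact this
  set T : ℝ := sSup S with hT
  have hT0 : 0 ≤ T := le_csSup hbdd h0S
  have hle : ∀ t ∈ S, t ≤ T := fun t ht => le_csSup hbdd ht
  have hmemΩ : ∀ t : ℝ, T < t → g t ∈ Ω := by
    intro t htT
    by_contra h
    exact absurd (hle t ⟨le_trans hT0 htT.le, h⟩) (not_le.2 htT)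
  have hTc : g T ∈ Ωᶜ := by
    by_contra h
    rw [Set.notMem_compl_iff] at h
    obtain ⟨ε, hε, hball⟩ := Metric.isOpen_iff.mp hΩ (g T) h
    have hub' : ∀ t ∈ S, t ≤ T - ε := by
      intro t ht
      by_contra hlt
      push_neg at hlt
      have h1 : dist (g t) (g T) = |t - T| := hdist t T ht.1 hT0
      have h2 : |t - T| < ε := by
        rw [abs_lt]
        constructor <;> [linarith [hle t ht]; linarith [hle t ht]]
      exact ht.2 (hball (by rw [mem_ball, h1]; exact h2))
    have := csSup_le ⟨0, h0S⟩ hub'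
    linarith
  refine ⟨fun t => g (T + t), ?_, ?_, ?_⟩
  · intro s t hs ht
    rw [hdist (T + s) (T + t) (by linarith) (by linarith)]
    ring_nf
  · rw [hΩ.frontier_eq]
    refine ⟨Metric.mem_closure_iff.mpr fun ε hε => ?_, by simpa using hTc⟩
    refine ⟨g (T + ε / 2), hmemΩ _ (by linarith), ?_⟩
    show dist (g (T + 0)) (g (T + ε / 2)) < ε
    rw [add_zero, hdist T (T + ε/2) hT0 (by linarith), abs_of_nonpos (by linarith)]
    linarith
  · intro t ht
    exact hmemΩ _ (by linarith)
end

section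
/- Let X be a geodesic metric space and Ω₁, Ω₂, Ω₃ ⊂ X open sets whose complements X∖Ω₁, X∖Ω₂, X∖Ω₃ are nonempty and pairwise disjoint, with D_{ij} := inf{ d(x,y) : x ∈ X∖Ω_i, y ∈ X∖Ω_j } > 0 for all i ≠ j. Then it is impossible that the identities d_{X∖Ω_i}(x) + d_{X∖Ω_j}(x) = D_{ij} hold for all x ∈ Ω₁ ∩ Ω₂ ∩ Ω₃ and all pairs i ≠ j; i.e., assuming these identities yields a contradiction. -/
open Metric Set

/-- In a geodesic space there cannot be three open sets with nonempty
pairwise disjoint complements at pairwise positive distances `D i j` such that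
`d_{(Ω i)ᶜ} + d_{(Ω j)ᶜ} = D i j` holds on `Ω 0 ∩ Ω 1 ∩ Ω 2` for all pairs `i ≠ j`. -/
theorem no_three_mean_convex_boundaries {X : Type*} [MetricSpace X]
    (hgeo : ∀ x y : X, ∃ γ : ℝ → X, γ 0 = x ∧ γ (dist x y) = y ∧
      ∀ s ∈ Set.Icc (0:ℝ) (dist x y), ∀ t ∈ Set.Icc (0:ℝ) (dist x y),
        dist (γ s) (γ t) = |s - t|)
    (Ω : Fin 3 → Set X) (hopen : ∀ i, IsOpen (Ω i))
    (hne : ∀ i, (Ω i)ᶜ.Nonempty)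
    (hdisj : ∀ i j, i ≠ j → Disjoint (Ω i)ᶜ (Ω j)ᶜ)
    (D : Fin 3 → Fin 3 → ℝ)
    (hD : ∀ i j, i ≠ j →
      D i j = sInf {r : ℝ | ∃ x ∈ (Ω i)ᶜ, ∃ y ∈ (Ω j)ᶜ, dist x y = r})
    (hDpos : ∀ i j, i ≠ j → 0 < D i j)
    (hid : ∀ i j, i ≠ j → ∀ x ∈ Ω 0 ∩ Ω 1 ∩ Ω 2,
      infDist x (Ω i)ᶜ + infDist x (Ω j)ᶜ = D i j) :
    False := by
  by_cases hΩ : (Ω 0 ∩ Ω 1 ∩ Ω 2).Nonempty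
  · -- Nonempty case: the distance functions are constant on Ω, contradiction
    obtain ⟨x, hx⟩ := hΩ
    -- value of infDist to (Ω 0)ᶜ at any point of the intersection is constant
    have hconst : ∀ z ∈ Ω 0 ∩ Ω 1 ∩ Ω 2,
        infDist z (Ω 0)ᶜ = (D 0 1 + D 0 2 - D 1 2) / 2 := by
      intro z hz
      have e01 := hid 0 1 (by decide) z hz
      have e02 := hid 0 2 (by decide) z hz
      have e12 := hid 1 2 (by decide) z hz
      linarith
    set d0 := infDist x (Ω 0)ᶜ with hd0
    -- d0 > 0 since x ∈ Ω 0 which is open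
    have hd0pos : 0 < d0 := by
      have hxc : x ∉ (Ω 0)ᶜ := by simpa using hx.1.1
      exact ((hopen 0).isClosed_compl.notMem_iff_infDist_pos (hne 0)).mp hxc
    -- ball x r ⊆ Ω 0 ∩ Ω 1 ∩ Ω 2
    have hOopen : IsOpen (Ω 0 ∩ Ω 1 ∩ Ω 2) := ((hopen 0).inter (hopen 1)).inter (hopen 2)
    obtain ⟨r, hrpos, hr⟩ := Metric.isOpen_iff.mp hOopen x hx
    set m := min r d0 with hm
    have hmpos : 0 < m := lt_min hrpos hd0pos
    -- pick p ∈ (Ω 0)ᶜ with dist x p < d0 + m/4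
    obtain ⟨p, hp, hdp⟩ := (Metric.infDist_lt_iff (hne 0)).mp
      (show infDist x (Ω 0)ᶜ < d0 + m / 4 by rw [← hd0]; linarith)
    obtain ⟨γ, hγ0, hγL, hiso⟩ := hgeo x p
    set L := dist x p with hL
    have hd0L : d0 ≤ L := infDist_le_dist_of_mem hp
    set t : ℝ := m / 2 with ht
    have htmem : t ∈ Icc (0:ℝ) L := ⟨by linarith, by
      have : m ≤ d0 := min_le_right _ _
      linarith⟩
    have h0mem : (0:ℝ) ∈ Icc (0:ℝ) L := ⟨le_refl _, dist_nonneg⟩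
    have hLmem : L ∈ Icc (0:ℝ) L := ⟨dist_nonneg, le_refl _⟩
    -- γ t ∈ Ω
    have hdxt : dist (γ t) x = t := by
      have := hiso t htmem 0 h0mem
      rw [hγ0] at this
      rw [this]
      simp [abs_of_nonneg (by linarith : (0:ℝ) ≤ t)]
    have hytΩ : γ t ∈ Ω 0 ∩ Ω 1 ∩ Ω 2 := by
      apply hr
      rw [Metric.mem_ball, hdxt]
      have : m ≤ r := min_le_left _ _
      linarith
    -- infDist (γ t) (Ω 0)ᶜ < d0
    have hlt : infDist (γ t) (Ω 0)ᶜ < d0 := by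
      have hdtp : dist (γ t) p = L - t := by
        have := hiso t htmem L hLmem
        rw [hγL] at this
        rw [this, abs_of_nonpos (by linarith [htmem.2] : t - L ≤ 0)]
        ring
      calc infDist (γ t) (Ω 0)ᶜ ≤ dist (γ t) p := infDist_le_dist_of_mem hp
        _ = L - t := hdtp
        _ < d0 := by rw [hL]; linarith
    rw [hconst (γ t) hytΩ, ← hconst x hx, ← hd0] at hlt
    exact lt_irrefl _ hlt
  · -- Empty case: the complements cover X; use a geodesic from C₀ to C₁
    have hcover : ∀ z : X, z ∈ (Ω 0)ᶜ ∪ (Ω 1)ᶜ ∪ (Ω 2)ᶜ := by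
      intro z
      by_contra hz
      simp only [mem_union, mem_compl_iff, not_or, not_not] at hz
      exact hΩ ⟨z, ⟨⟨hz.1.1, hz.1.2⟩, hz.2⟩⟩
    obtain ⟨a, ha⟩ := hne 0
    obtain ⟨b, hb⟩ := hne 1
    have hab : a ≠ b := by
      intro h
      exact Set.disjoint_left.mp (hdisj 0 1 (by decide)) ha (h ▸ hb)
    obtain ⟨γ, hγ0, hγL, hiso⟩ := hgeo a b
    set L := dist a b with hL
    have hLpos : 0 < L := dist_pos.mpr hab
    -- γ is continuous on Icc 0 L
    have hlip : LipschitzOnWith 1 γ (Icc 0 L) :=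
      LipschitzOnWith.of_dist_le_mul (fun s hs u hu => by
        rw [hiso s hs u hu]; simp [Real.dist_eq])
    have hcont : ContinuousOn γ (Icc 0 L) := hlip.continuousOn
    -- the sets A i
    set A : Fin 3 → Set ℝ := fun i => Icc 0 L ∩ γ ⁻¹' (Ω i)ᶜ with hA
    have hAclosed : ∀ i, IsClosed (A i) := fun i =>
      hcont.preimage_isClosed_of_isClosed isClosed_Icc (hopen i).isClosed_compl
    have h0A : (0:ℝ) ∈ A 0 := ⟨⟨le_refl _, le_of_lt hLpos⟩, by simpa [hγ0] using ha⟩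
    have hAne : (A 0).Nonempty := ⟨0, h0A⟩
    have hAbdd : BddAbove (A 0) := BddAbove.mono (Set.inter_subset_left) bddAbove_Icc
    set s := sSup (A 0) with hs
    have hsA : s ∈ A 0 := (hAclosed 0).csSup_mem hAne hAbdd
    have hsIcc : s ∈ Icc (0:ℝ) L := hsA.1
    have hsC0 : γ s ∈ (Ω 0)ᶜ := hsA.2
    have hsneL : s ≠ L := by
      intro h
      have : γ L ∈ (Ω 0)ᶜ := h ▸ hsC0
      rw [hγL] at this
      exact Set.disjoint_left.mp (hdisj 0 1 (by decide)) this hb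
    have hsL : s < L := lt_of_le_of_ne hsIcc.2 hsneL
    -- (s, L] maps into C₁ ∪ C₂
    have hsub : Ioc s L ⊆ A 1 ∪ A 2 := by
      intro u hu
      have huIcc : u ∈ Icc (0:ℝ) L := ⟨le_trans hsIcc.1 (le_of_lt hu.1), hu.2⟩
      rcases hcover (γ u) with (h | h) | h
      · exact absurd (le_csSup hAbdd ⟨huIcc, h⟩) (not_le.mpr hu.1)
      · exact Or.inl ⟨huIcc, h⟩
      · exact Or.inr ⟨huIcc, h⟩
    -- s is in the closure of Ioc s L, hence in A 1 ∪ A 2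
    have hsmem : s ∈ A 1 ∪ A 2 := by
      have h1 : s ∈ closure (Ioc s L) := by
        rw [closure_Ioc hsneL]
        exact ⟨le_refl _, le_of_lt hsL⟩
      have h2 : closure (Ioc s L) ⊆ A 1 ∪ A 2 :=
        ((hAclosed 1).union (hAclosed 2)).closure_subset_iff.mpr hsub
      exact h2 h1
    rcases hsmem with h | h
    · exact Set.disjoint_left.mp (hdisj 0 1 (by decide)) hsC0 h.2
    · exact Set.disjoint_left.mp (hdisj 0 2 (by decide)) hsC0 h.2
end

section
/- In the ambient Hausdorff convergence setting, assume in addition that each X_i is geodesic: any two points x,y ∈ X_i are joined by a unit-speed geodesic in X_i, i.e. a map γ:[0,d(x,y)]→X_i with γ(0)=x, γ(d(x,y))=y and d(γ(s),γ(t))=|s−t|. Let Ω_i ⊂ X_i be subsets with A_i := X_i∖Ω_i nonempty, let f_i : X_i → ℝ be given by f_i := d_{A_i} restricted to X_i, and suppose f_i converges relative to Z to a function u : X → ℝ. Then u is 1-Lipschitz, u ≥ 0, the set F := {x ∈ X : u(x) = 0} is nonempty, and u(x) = d_F(x) for every x ∈ X; in other words, u is the distance function to the complement of Ω := {x ∈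 X : u(x) > 0} in X. -/
open Metric Set Filter

/-- In the ambient Hausdorff convergence setting with geodesic spaces
`X i`, if the distance functions `d_{X_i ∖ Ω_i}` converge relative to `Z` to `u` on `X`,
then `u` is 1-Lipschitz and nonnegative on `X`, its zero set `F` in `X` is nonempty, and
`u` equals the distance function to `F`, i.e. the distance to the complement of
`Ω = {u > 0}` in `X`. -/
theorem limit_of_boundary_distance_functions {Z : Type*} [MetricSpace Z] [CompactSpace Z]
    (Xs : ℕ → Set Z) (X : Set Z)
    (hXsc : ∀ i, IsCompact (Xs i)) (hXsne : ∀ i, (Xs i).Nonempty)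
    (hXc : IsCompact X) (hXne : X.Nonempty)
    (hH : Filter.Tendsto (fun i => hausdorffDist (Xs i) X) Filter.atTop (nhds 0))
    (hgeo : ∀ i, ∀ x ∈ Xs i, ∀ y ∈ Xs i, ∃ γ : ℝ → Z,
      γ 0 = x ∧ γ (dist x y) = y ∧
      (∀ s ∈ Set.Icc (0:ℝ) (dist x y), γ s ∈ Xs i) ∧
      ∀ s ∈ Set.Icc (0:ℝ) (dist x y), ∀ t ∈ Set.Icc (0:ℝ) (dist x y),
        dist (γ s) (γ t) = |s - t|)
    (Ωs : ℕ → Set Z) (hΩsub : ∀ i, Ωs i ⊆ Xs i)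
    (hAne : ∀ i, (Xs i \ Ωs i).Nonempty)
    (u : Z → ℝ)
    (hconv : ∀ x ∈ X, ∀ xs : ℕ → Z, (∀ i, xs i ∈ Xs i) →
      Filter.Tendsto (fun i => dist (xs i) x) Filter.atTop (nhds 0) →
      Filter.Tendsto (fun i => infDist (xs i) (Xs i \ Ωs i))
        Filter.atTop (nhds (u x))) :
    LipschitzOnWith 1 u X ∧
    (∀ x ∈ X, 0 ≤ u x) ∧
    {x ∈ X | u x = 0}.Nonempty ∧
    ∀ x ∈ X, u x = infDist x {y ∈ X | u y = 0} := by
  have hEd : ∀ i, EMetric.hausdorffEdist (Xs i) X ≠ ⊤ := fun i =>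
    Metric.hausdorffEdist_ne_top_of_nonempty_of_bounded (hXsne i) hXne (hXsc i).isBounded
      hXc.isBounded
  -- approximating sequences
  have approx : ∀ b ∈ X, ∃ xs : ℕ → Z, (∀ i, xs i ∈ Xs i) ∧
      Tendsto (fun i => dist (xs i) b) atTop (nhds 0) := by
    intro b hb
    choose xs hxs hdist using fun i => (hXsc i).exists_infDist_eq_dist (hXsne i) b
    refine ⟨xs, hxs, ?_⟩
    refine squeeze_zero (fun i => dist_nonneg) (fun i => ?_) hH
    rw [dist_comm, ← hdist i]
    calc infDist b (Xs i) ≤ hausdorffDist X (Xs i) :=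
          infDist_le_hausdorffDist_of_mem hb (by rw [EMetric.hausdorffEdist_comm]; exact hEd i)
      _ = hausdorffDist (Xs i) X := hausdorffDist_comm
  -- limits of points of `Xs i` lie in `X`
  have memX : ∀ (a : ℕ → Z) (φ : ℕ → ℕ) (b : Z), (∀ i, a i ∈ Xs i) →
      Tendsto φ atTop atTop → Tendsto (a ∘ φ) atTop (nhds b) → b ∈ X := by
    intro a φ b ha hφ htend
    have h1 : Tendsto (fun k => infDist (a (φ k)) X) atTop (nhds (infDist b X)) :=
      ((continuous_infDist_pt X).tendsto b).comp htend
    have h0 : Tendsto (fun k => infDist (a (φ k)) X) atTop (nhds 0) := by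
      refine squeeze_zero (fun k => infDist_nonneg) (fun k => ?_) (hH.comp hφ)
      exact infDist_le_hausdorffDist_of_mem (ha (φ k)) (hEd (φ k))
    have hb0 : infDist b X = 0 := tendsto_nhds_unique h1 h0
    exact (hXc.isClosed.mem_iff_infDist_zero hXne).2 hb0
  -- key sequential lemma
  have keyD : ∀ a : ℕ → Z, (∀ i, a i ∈ Xs i \ Ωs i) →
      ∃ b, b ∈ X ∧ u b = 0 ∧ ∃ φ : ℕ → ℕ, StrictMono φ ∧
        Tendsto (a ∘ φ) atTop (nhds b) := by
    intro a ha
    obtain ⟨b, -, φ, hφ, htend⟩ := isCompact_univ.tendsto_subseq (fun i => mem_univ (a i))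
    have hbX : b ∈ X := memX a φ b (fun i => (ha i).1) hφ.tendsto_atTop htend
    obtain ⟨xs, hxs, hxsd⟩ := approx b hbX
    have hxst : Tendsto xs atTop (nhds b) := tendsto_iff_dist_tendsto_zero.2 hxsd
    have hu := (hconv b hbX xs hxs hxsd).comp hφ.tendsto_atTop
    have h0 : Tendsto (fun k => infDist (xs (φ k)) (Xs (φ k) \ Ωs (φ k))) atTop (nhds 0) := by
      have hd : Tendsto (fun k => dist (xs (φ k)) (a (φ k))) atTop (nhds 0) := by
        have := (hxst.comp hφ.tendsto_atTop).dist htend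
        simpa using this
      exact squeeze_zero (fun k => infDist_nonneg)
        (fun k => infDist_le_dist_of_mem (ha (φ k))) hd
    exact ⟨b, hbX, tendsto_nhds_unique hu h0, φ, hφ, htend⟩
  -- Lipschitz
  have hLip : LipschitzOnWith 1 u X := by
    rw [lipschitzOnWith_iff_dist_le_mul]
    intro x hx y hy
    obtain ⟨xs, hxs, hxd⟩ := approx x hx
    obtain ⟨ys, hys, hyd⟩ := approx y hy
    have hux := hconv x hx xs hxs hxd
    have huy := hconv y hy ys hys hyd
    have g : Tendsto (fun i => dist (infDist (xs i) (Xs i \ Ωs i))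
        (infDist (ys i) (Xs i \ Ωs i))) atTop (nhds (dist (u x) (u y))) := hux.dist huy
    have h : Tendsto (fun i => dist (xs i) x + dist x y + dist (ys i) y) atTop
        (nhds (0 + dist x y + 0)) := (hxd.add tendsto_const_nhds).add hyd
    have hle : ∀ i, dist (infDist (xs i) (Xs i \ Ωs i)) (infDist (ys i) (Xs i \ Ωs i)) ≤
        dist (xs i) x + dist x y + dist (ys i) y := by
      intro i
      calc dist (infDist (xs i) (Xs i \ Ωs i)) (infDist (ys i) (Xs i \ Ωs i))
          ≤ dist (xs i) (ys i) := by
            simpa using (lipschitz_infDist_pt (Xs i \ Ωs i)).dist_le_mul (xs i) (ys i)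
        _ ≤ dist (xs i) x + dist x y + dist y (ys i) := dist_triangle4 _ _ _ _
        _ = dist (xs i) x + dist x y + dist (ys i) y := by rw [dist_comm y]
    have := le_of_tendsto_of_tendsto' g h hle
    simpa using this
  -- nonnegativity
  have hnn : ∀ x ∈ X, 0 ≤ u x := by
    intro x hx
    obtain ⟨xs, hxs, hxd⟩ := approx x hx
    exact ge_of_tendsto' (hconv x hx xs hxs hxd) fun i => infDist_nonneg
  -- nonempty zero set
  choose a0 ha0 using fun i => hAne i
  obtain ⟨b0, hb0X, hb00, -⟩ := keyD a0 ha0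
  have hFne : {x ∈ X | u x = 0}.Nonempty := ⟨b0, hb0X, hb00⟩
  refine ⟨hLip, hnn, hFne, fun x hx => ?_⟩
  have hdle : ∀ y ∈ X, u y = 0 → u x ≤ dist x y := by
    intro y hy hy0
    have := hLip.dist_le_mul x hx y hy
    rw [Real.dist_eq, hy0, sub_zero] at this
    calc u x ≤ |u x| := le_abs_self _
      _ ≤ 1 * dist x y := this
      _ = dist x y := one_mul _
  refine le_antisymm ?_ ?_
  · -- u x ≤ infDist x F, via compactness of F
    have hFeq : {y ∈ X | u y = 0} = X ∩ u ⁻¹' {0} := by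
      ext y
      simp [Set.mem_setOf_eq]
    have hFclosed : IsClosed {y ∈ X | u y = 0} := by
      rw [hFeq]
      exact hLip.continuousOn.preimage_isClosed_of_isClosed hXc.isClosed isClosed_singleton
    have hFc : IsCompact {y ∈ X | u y = 0} :=
      hXc.of_isClosed_subset hFclosed (fun y hy => hy.1)
    obtain ⟨y, hyF, hyd⟩ := hFc.exists_infDist_eq_dist hFne x
    rw [hyd]
    exact hdle y hyF.1 hyF.2
  · -- infDist x F ≤ u x
    obtain ⟨xs, hxs, hxd⟩ := approx x hx
    have hux := hconv x hx xs hxs hxd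
    have hpick : ∀ i, ∃ y ∈ Xs i \ Ωs i,
        dist (xs i) y < infDist (xs i) (Xs i \ Ωs i) + 1 / ((i : ℝ) + 1) := by
      intro i
      refine (infDist_lt_iff (hAne i)).1 ?_
      have : (0:ℝ) < 1 / ((i : ℝ) + 1) := by positivity
      linarith
    choose a haA had using hpick
    obtain ⟨b, hbX, hb0, φ, hφ, htend⟩ := keyD a haA
    have hxst : Tendsto xs atTop (nhds x) := tendsto_iff_dist_tendsto_zero.2 hxd
    have hg : Tendsto (fun k => dist (xs (φ k)) (a (φ k))) atTop (nhds (dist x b)) :=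
      (hxst.comp hφ.tendsto_atTop).dist htend
    have hh : Tendsto (fun k => infDist (xs (φ k)) (Xs (φ k) \ Ωs (φ k)) +
        1 / ((φ k : ℝ) + 1)) atTop (nhds (u x + 0)) := by
      refine (hux.comp hφ.tendsto_atTop).add ?_
      exact tendsto_one_div_add_atTop_nhds_zero_nat.comp hφ.tendsto_atTop
    have hdb : dist x b ≤ u x := by
      have := le_of_tendsto_of_tendsto' hg hh fun k => (had (φ k)).le
      simpa using this
    exact le_trans (infDist_le_dist_of_mem ⟨hbX, hb0⟩) hdb
end

section
/- In the ambient Hausdorff convergence setting, assume in addition that each X_i is geodesic: any two points x,y ∈ X_i are joined by a unit-speed geodesic in X_i, i.e. a map γ:[0,d(x,y)]→X_i with γ(0)=x, γ(d(x,y))=y and d(γ(s),γ(t))=|s−t|. Let c, C > 0, let Ω_i ⊂ X_i be relatively open with X_i∖Ω_i ≠ ∅, and assume each Ω_i is a (c,C)-uniform domain in X_i. Suppose f_i := d_{X_i∖Ω_i} restricted to X_i converges relative to Z to u : X → ℝ, and set Ω := {x ∈ X : u(x) > 0}. Then X∖Ω ≠ ∅ and Ω is a (c,C)-uniform domain in X.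 -/
open Metric Set Filter
open EMetric

section UDSaux


lemma clamp_lip (a b l : ℝ) : |min (max a 0) l - min (max b 0) l| ≤ |a - b| := by
  refine (abs_min_sub_min_le_max _ _ _ _).trans (max_le (abs_max_sub_max_le_abs a b 0) ?_)
  simpa using abs_nonneg (a - b)

lemma exists_chain {Z : Type*} [MetricSpace Z] (W : Set Z)
    (hW : ∀ x ∈ W, ∀ y ∈ W, ∃ g : ℝ → Z, g 0 = x ∧ g (dist x y) = y ∧
      (∀ s ∈ Set.Icc (0:ℝ) (dist x y), g s ∈ W) ∧
      ∀ s ∈ Set.Icc (0:ℝ) (dist x y), ∀ t ∈ Set.Icc (0:ℝ) (dist x y),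
        dist (g s) (g t) = |s - t|)
    (p : ℕ → Z) (hp : ∀ k, p k ∈ W) :
    ∀ n : ℕ, ∃ G : ℝ → Z,
      (∀ s t : ℝ, dist (G s) (G t) ≤ |s - t|) ∧ (∀ t ≤ (0:ℝ), G t = p 0) ∧
      (∀ t, (∑ k ∈ Finset.range n, dist (p k) (p (k+1))) ≤ t → G t = p n) ∧
      ∀ t : ℝ, G t ∈ W ∧ ∃ k, dist (G t) (p k) ≤ dist (p k) (p (k+1)) := by
  intro n
  induction n with
  | zero =>
    exact ⟨fun _ => p 0, by simp, fun _ _ => rfl, by simp, fun t => ⟨hp 0, 0, by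
      simpa using dist_nonneg⟩⟩
  | succ n ih =>
    obtain ⟨G, hGlip, hG0, hGT, hGmem⟩ := ih
    set T : ℝ := ∑ k ∈ Finset.range n, dist (p k) (p (k+1)) with hTdef
    have hT0 : 0 ≤ T := Finset.sum_nonneg fun _ _ => dist_nonneg
    obtain ⟨g, hg0, hgl, hgmem, hgiso⟩ := hW (p n) (hp n) (p (n+1)) (hp (n+1))
    set l : ℝ := dist (p n) (p (n+1)) with hldef
    have hl0 : 0 ≤ l := dist_nonneg
    have hcl : ∀ a : ℝ, min (max a 0) l ∈ Set.Icc (0:ℝ) l :=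
      fun a => ⟨le_min (le_max_right _ _) hl0, min_le_right _ _⟩
    set g' : ℝ → Z := fun s => g (min (max s 0) l) with hg'def
    have hg'lip : ∀ a b : ℝ, dist (g' a) (g' b) ≤ |a - b| := fun a b => by
      rw [hg'def]; rw [hgiso _ (hcl a) _ (hcl b)]; exact clamp_lip a b l
    have hg'0 : g' 0 = p n := by
      simp only [hg'def]; rw [show min (max (0:ℝ) 0) l = 0 by simp [hl0], hg0]
    have hg'l : ∀ s, l ≤ s → g' s = p (n+1) := fun s hs => by
      simp only [hg'def]
      rw [min_eq_right (hs.trans (le_max_left s 0)), hgl]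
    refine ⟨fun t => if t ≤ T then G t else g' (t - T), ?_, ?_, ?_, ?_⟩
    · -- Lipschitz
      have key : ∀ s t : ℝ, s ≤ t →
          dist (if s ≤ T then G s else g' (s - T)) (if t ≤ T then G t else g' (t - T))
            ≤ |s - t| := by
        intro s t hst
        rcases le_or_gt t T with ht | ht
        · rw [if_pos (hst.trans ht), if_pos ht]; exact hGlip s t
        · rcases le_or_gt s T with hs | hs
          · rw [if_pos hs, if_neg (not_le.2 ht)]
            have h1 : dist (G s) (p n) ≤ |s - T| := by
              rw [← hGT T le_rfl]; exact hGlip s T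
            have h2 : dist (p n) (g' (t - T)) ≤ |t - T| := by
              rw [← hg'0]
              exact (hg'lip 0 (t - T)).trans (by rw [zero_sub, abs_neg])
            calc dist (G s) (g' (t - T)) ≤ _ + _ := dist_triangle _ (p n) _
              _ ≤ |s - T| + |t - T| := add_le_add h1 h2
              _ ≤ |s - t| := by
                  rw [abs_of_nonpos (by linarith), abs_of_nonneg (by linarith),
                    abs_of_nonpos (by linarith)]; linarith
          · rw [if_neg (not_le.2 ht), if_neg (not_le.2 hs)]
            simpa using hg'lip (s - T) (t - T)
      intro s t
      rcases le_total s t with h | h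
      · exact key s t h
      · rw [dist_comm, abs_sub_comm]; exact key t s h
    · intro t ht
      show (if t ≤ T then G t else g' (t - T)) = p 0
      rw [if_pos (ht.trans hT0)]; exact hG0 t ht
    · intro t ht
      rw [Finset.sum_range_succ] at ht
      show (if t ≤ T then G t else g' (t - T)) = p (n+1)
      rw [← hTdef, ← hldef] at ht
      rcases le_or_gt t T with h | h
      · have hl0' : l ≤ 0 := by linarith
        have hpe : p n = p (n+1) := dist_le_zero.1 hl0'
        rw [if_pos h, hGT t (by linarith), hpe]
      · rw [if_neg (not_le.2 h)]
        exact hg'l _ (by linarith)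
    · intro t
      show (if t ≤ T then G t else g' (t - T)) ∈ W ∧
        ∃ k, dist (if t ≤ T then G t else g' (t - T)) (p k) ≤ dist (p k) (p (k+1))
      rcases le_or_gt t T with h | h
      · rw [if_pos h]; exact hGmem t
      · rw [if_neg (not_le.2 h)]
        refine ⟨hgmem _ (hcl _), n, ?_⟩
        have h2 : dist (g (min (max (t-T) 0) l)) (g 0) = |min (max (t-T) 0) l - 0| :=
          hgiso _ (hcl _) 0 ⟨le_rfl, hl0⟩
        have h3 : dist (g' (t - T)) (p n) ≤ l := by
          rw [hg'def, ← hg0]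
          simp only []
          rw [h2, sub_zero, abs_of_nonneg (hcl (t-T)).1]
          exact min_le_right _ _
        exact h3


lemma evar_le_of_lip {Z : Type*} [MetricSpace Z] {f : ℝ → Z} {K : ℝ} (hK : 0 ≤ K)
    (h : ∀ s ∈ Set.Icc (0:ℝ) 1, ∀ t ∈ Set.Icc (0:ℝ) 1, dist (f s) (f t) ≤ K * |s - t|) :
    eVariationOn f (Set.Icc 0 1) ≤ ENNReal.ofReal K := by
  have hlip : LipschitzOnWith K.toNNReal f (Set.Icc 0 1) := by
    rw [lipschitzOnWith_iff_dist_le_mul]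
    intro s hs t ht
    refine (h s hs t ht).trans ?_
    rw [← Real.dist_eq, Real.coe_toNNReal K hK]
  have hid : eVariationOn (fun t : ℝ => t) (Set.Icc 0 1) ≤ ENNReal.ofReal 1 := by
    have := MonotoneOn.eVariationOn_le (f := fun t : ℝ => t) (s := Set.Icc 0 1)
      (fun a _ b _ hab => hab) (a := 0) (b := 1) (by simp) (by simp [zero_le_one])
    simpa using this
  calc eVariationOn f (Set.Icc 0 1)
      = eVariationOn (f ∘ fun t : ℝ => t) (Set.Icc 0 1) := rfl
    _ ≤ K.toNNReal * eVariationOn (fun t : ℝ => t) (Set.Icc 0 1) :=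
        hlip.comp_eVariationOn_le (Set.mapsTo_id _)
    _ ≤ K.toNNReal * ENNReal.ofReal 1 := by gcongr
    _ = ENNReal.ofReal K := by
        rw [ENNReal.ofReal_one, mul_one, ENNReal.ofReal]

section aux

variable {Z : Type*} [MetricSpace Z] [CompactSpace Z]

lemma UDS.sel_seq (Xs : ℕ → Set Z) (X : Set Z)
    (hXsc : ∀ i, IsCompact (Xs i)) (hXsne : ∀ i, (Xs i).Nonempty)
    (hXc : IsCompact X) (hXne : X.Nonempty)
    (hH : Filter.Tendsto (fun i => hausdorffDist (Xs i) X) Filter.atTop (nhds 0))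
    {x : Z} (hx : x ∈ X) :
    ∃ xs : ℕ → Z, (∀ i, xs i ∈ Xs i) ∧
      Filter.Tendsto (fun i => dist (xs i) x) Filter.atTop (nhds 0) := by
  have h1 : ∀ i : ℕ, ∃ yy ∈ Xs i, dist x yy < infDist x (Xs i) + (1/(i+1)) := fun i =>
    (infDist_lt_iff (hXsne i)).1 (lt_add_of_pos_right _ (by positivity))
  choose xs hmem hlt using h1
  refine ⟨xs, hmem, squeeze_zero (fun i => dist_nonneg)
    (g := fun i => hausdorffDist (Xs i) X + 1/(i+1)) (fun i => ?_) ?_⟩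
  · have hfin : hausdorffEdist X (Xs i) ≠ ⊤ :=
      hausdorffEdist_ne_top_of_nonempty_of_bounded hXne (hXsne i)
        hXc.isBounded (hXsc i).isBounded
    have h2 : infDist x (Xs i) ≤ hausdorffDist X (Xs i) :=
      infDist_le_hausdorffDist_of_mem hx hfin
    rw [hausdorffDist_comm] at h2
    have := (hlt i).le
    rw [dist_comm]
    linarith
  · simpa using hH.add tendsto_one_div_add_atTop_nhds_zero_nat

end aux

end UDSaux

/-- `Ω` is a `(c,C)`-uniform domain in the metric subspace `Y` (of an ambient metric
space `Z`): any two points of `Ω` are joined by a continuous curve in `Ω` of length at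
most `C·d(x,y)` which stays at distance at least `c·min(d(x,γ t), d(γ t, y))` from
`Y ∖ Ω`. -/
def IsUniformDomain {Z : Type*} [MetricSpace Z] (c C : ℝ) (Y Ω : Set Z) : Prop :=
  ∀ x ∈ Ω, ∀ y ∈ Ω, ∃ γ : ℝ → Z,
    ContinuousOn γ (Set.Icc 0 1) ∧ γ 0 = x ∧ γ 1 = y ∧
    (∀ t ∈ Set.Icc (0:ℝ) 1, γ t ∈ Ω) ∧
    eVariationOn γ (Set.Icc 0 1) ≤ ENNReal.ofReal (C * dist x y) ∧
    ∀ t ∈ Set.Icc (0:ℝ) 1,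
      c * min (dist x (γ t)) (dist (γ t) y) ≤ infDist (γ t) (Y \ Ω)

/-- In the ambient Hausdorff convergence setting with geodesic `X i`,
if each `Ω i` is a relatively open `(c,C)`-uniform domain in `X i` and the distance
functions `d_{X_i ∖ Ω_i}` converge relative to `Z` to `u`, then `Ω := {x ∈ X | u x > 0}`
has nonempty complement in `X` and is a `(c,C)`-uniform domain in `X`. -/
theorem uniform_domain_stability {Z : Type*} [MetricSpace Z] [CompactSpace Z]
    (Xs : ℕ → Set Z) (X : Set Z)
    (hXsc : ∀ i, IsCompact (Xs i)) (hXsne : ∀ i, (Xs i).Nonempty)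
    (hXc : IsCompact X) (hXne : X.Nonempty)
    (hH : Filter.Tendsto (fun i => hausdorffDist (Xs i) X) Filter.atTop (nhds 0))
    (hgeo : ∀ i, ∀ x ∈ Xs i, ∀ y ∈ Xs i, ∃ γ : ℝ → Z,
      γ 0 = x ∧ γ (dist x y) = y ∧
      (∀ s ∈ Set.Icc (0:ℝ) (dist x y), γ s ∈ Xs i) ∧
      ∀ s ∈ Set.Icc (0:ℝ) (dist x y), ∀ t ∈ Set.Icc (0:ℝ) (dist x y),
        dist (γ s) (γ t) = |s - t|)
    (c C : ℝ) (hc : 0 < c) (hC : 0 < C)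
    (Ωs : ℕ → Set Z)
    (hrelopen : ∀ i, ∃ U : Set Z, IsOpen U ∧ Ωs i = U ∩ Xs i)
    (hAne : ∀ i, (Xs i \ Ωs i).Nonempty)
    (hunif : ∀ i, IsUniformDomain c C (Xs i) (Ωs i))
    (u : Z → ℝ)
    (hconv : ∀ x ∈ X, ∀ xs : ℕ → Z, (∀ i, xs i ∈ Xs i) →
      Filter.Tendsto (fun i => dist (xs i) x) Filter.atTop (nhds 0) →
      Filter.Tendsto (fun i => infDist (xs i) (Xs i \ Ωs i))
        Filter.atTop (nhds (u x))) :
    (X \ {x ∈ X | 0 < u x}).Nonempty ∧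
    IsUniformDomain c C X {x ∈ X | 0 < u x} := by
  classical
  set 𝒰 : Ultrafilter ℕ := Ultrafilter.of Filter.atTop with h𝒰def
  have hUle : (𝒰 : Filter ℕ) ≤ Filter.atTop := Ultrafilter.of_le _
  -- existence of ultrafilter limits in the compact space Z
  have hZlim : ∀ q : ℕ → Z, ∃ z : Z, Filter.Tendsto q (𝒰 : Filter ℕ) (nhds z) := by
    intro q
    obtain ⟨z, -, hz⟩ := isCompact_univ.ultrafilter_le_nhds (𝒰.map q)
      (by simp [Filter.le_principal_iff])
    exact ⟨z, hz⟩
  -- sequence selection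
  have sel : ∀ x ∈ X, ∃ xs : ℕ → Z, (∀ i, xs i ∈ Xs i) ∧
      Filter.Tendsto (fun i => dist (xs i) x) Filter.atTop (nhds 0) :=
    fun x hx => UDS.sel_seq Xs X hXsc hXsne hXc hXne hH hx
  -- 𝒰-limits of points in Xs i lie in X
  have hmemX : ∀ q : ℕ → Z, (∀ᶠ i in (𝒰 : Filter ℕ), q i ∈ Xs i) → ∀ z : Z,
      Filter.Tendsto q (𝒰 : Filter ℕ) (nhds z) → z ∈ X := by
    intro q hq z hz
    have h1 : Filter.Tendsto (fun i => infDist (q i) X) (𝒰 : Filter ℕ)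
        (nhds (infDist z X)) := ((continuous_infDist_pt X).tendsto z).comp hz
    have h2 : Filter.Tendsto (fun i => hausdorffDist (Xs i) X) (𝒰 : Filter ℕ) (nhds 0) :=
      hH.mono_left hUle
    have h3 : ∀ᶠ i in (𝒰 : Filter ℕ), infDist (q i) X ≤ hausdorffDist (Xs i) X := by
      filter_upwards [hq] with i hqi
      exact infDist_le_hausdorffDist_of_mem hqi
        (hausdorffEdist_ne_top_of_nonempty_of_bounded (hXsne i) hXne
          (hXsc i).isBounded hXc.isBounded)
    have h4 : infDist z X ≤ 0 := le_of_tendsto_of_tendsto h1 h2 h3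
    have h5 : infDist z X = 0 := le_antisymm h4 infDist_nonneg
    exact (hXc.isClosed.mem_iff_infDist_zero hXne).2 h5
  -- u is the 𝒰-limit of the distance functions along any approximating sequence
  have hulim : ∀ x ∈ X, ∀ q : ℕ → Z, (∀ᶠ i in (𝒰 : Filter ℕ), q i ∈ Xs i) →
      Filter.Tendsto (fun i => dist (q i) x) (𝒰 : Filter ℕ) (nhds 0) →
      Filter.Tendsto (fun i => infDist (q i) (Xs i \ Ωs i)) (𝒰 : Filter ℕ)
        (nhds (u x)) := by
    intro x hx q hq hqx
    obtain ⟨xs, hxsmem, hxsd⟩ := sel x hx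
    have hg : Filter.Tendsto (fun i => infDist (xs i) (Xs i \ Ωs i)) (𝒰 : Filter ℕ)
        (nhds (u x)) := (hconv x hx xs hxsmem hxsd).mono_left hUle
    have hdiff : Filter.Tendsto
        (fun i => infDist (q i) (Xs i \ Ωs i) - infDist (xs i) (Xs i \ Ωs i))
        (𝒰 : Filter ℕ) (nhds 0) := by
      refine squeeze_zero_norm (a := fun i => dist (q i) x + dist (xs i) x) ?_ ?_
      · intro i
        show ‖infDist (q i) (Xs i \ Ωs i) - infDist (xs i) (Xs i \ Ωs i)‖
          ≤ dist (q i) x + dist (xs i) x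
        have h1 : infDist (q i) (Xs i \ Ωs i) ≤ infDist (xs i) (Xs i \ Ωs i)
            + dist (q i) (xs i) := infDist_le_infDist_add_dist
        have h2 : infDist (xs i) (Xs i \ Ωs i) ≤ infDist (q i) (Xs i \ Ωs i)
            + dist (xs i) (q i) := infDist_le_infDist_add_dist
        have h3 : dist (q i) (xs i) ≤ dist (q i) x + dist (xs i) x := by
          rw [dist_comm (xs i) x]; exact dist_triangle _ _ _
        rw [Real.norm_eq_abs, abs_le]
        rw [dist_comm (xs i) (q i)] at h2
        constructor <;> linarith
      · simpa using hqx.add (hxsd.mono_left hUle)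
    have := hdiff.add hg
    simpa using this
  -- u is 1-Lipschitz on X
  have hulip : ∀ a ∈ X, ∀ b ∈ X, u a ≤ u b + dist a b := by
    intro a ha b hb
    obtain ⟨as, hasmem, hasd⟩ := sel a ha
    obtain ⟨bs, hbsmem, hbsd⟩ := sel b hb
    have hga : Filter.Tendsto (fun i => infDist (as i) (Xs i \ Ωs i)) Filter.atTop
        (nhds (u a)) := hconv a ha as hasmem hasd
    have hgb : Filter.Tendsto (fun i => infDist (bs i) (Xs i \ Ωs i)) Filter.atTop
        (nhds (u b)) := hconv b hb bs hbsmem hbsd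
    have hda : Filter.Tendsto as Filter.atTop (nhds a) :=
      tendsto_iff_dist_tendsto_zero.2 hasd
    have hdb : Filter.Tendsto bs Filter.atTop (nhds b) :=
      tendsto_iff_dist_tendsto_zero.2 hbsd
    refine le_of_tendsto_of_tendsto hga (hgb.add (hda.dist hdb))
      (Filter.Eventually.of_forall fun i => ?_)
    exact infDist_le_infDist_add_dist
  -- Part 1 : the complement is nonempty
  have part1 : (X \ {x ∈ X | 0 < u x}).Nonempty := by
    set a : ℕ → Z := fun i => (hAne i).choose with hadef
    have ha : ∀ i, a i ∈ Xs i \ Ωs i := fun i => (hAne i).choose_spec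
    obtain ⟨z, hz⟩ := hZlim a
    have hzX : z ∈ X := hmemX a (Filter.Eventually.of_forall fun i => (ha i).1) z hz
    have hz0 : Filter.Tendsto (fun i => infDist (a i) (Xs i \ Ωs i)) (𝒰 : Filter ℕ)
        (nhds (u z)) := hulim z hzX a (Filter.Eventually.of_forall fun i => (ha i).1)
        (tendsto_iff_dist_tendsto_zero.1 hz)
    have hzz : Filter.Tendsto (fun i => infDist (a i) (Xs i \ Ωs i)) (𝒰 : Filter ℕ)
        (nhds 0) := by
      have : (fun i => infDist (a i) (Xs i \ Ωs i)) = fun _ => (0:ℝ) := by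
        funext i; exact infDist_zero_of_mem (ha i)
      rw [this]; exact tendsto_const_nhds
    have huz : u z = 0 := tendsto_nhds_unique hz0 hzz
    exact ⟨z, hzX, fun hmem => by simp only [mem_setOf_eq, huz] at hmem; exact lt_irrefl 0 hmem.2⟩
  refine ⟨part1, ?_⟩
  intro x hx y hy
  obtain ⟨hxX, hux⟩ := hx
  obtain ⟨hyX, huy⟩ := hy
  obtain ⟨xs, hxsmem, hxsd⟩ := sel x hxX
  obtain ⟨ys, hysmem, hysd⟩ := sel y hyX
  have hΩsub : ∀ i, Ωs i ⊆ Xs i := fun i => by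
    obtain ⟨U, -, hU⟩ := hrelopen i; rw [hU]; exact inter_subset_right
  have hxev : ∀ᶠ i in Filter.atTop, xs i ∈ Ωs i := by
    have := (hconv x hxX xs hxsmem hxsd).eventually (eventually_gt_nhds hux)
    filter_upwards [this] with i hi
    by_contra h
    have h0 : infDist (xs i) (Xs i \ Ωs i) = 0 :=
      infDist_zero_of_mem ⟨hxsmem i, h⟩
    rw [h0] at hi
    exact lt_irrefl 0 hi
  have hyev : ∀ᶠ i in Filter.atTop, ys i ∈ Ωs i := by
    have := (hconv y hyX ys hysmem hysd).eventually (eventually_gt_nhds huy)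
    filter_upwards [this] with i hi
    by_contra h
    have h0 : infDist (ys i) (Xs i \ Ωs i) = 0 :=
      infDist_zero_of_mem ⟨hysmem i, h⟩
    rw [h0] at hi
    exact lt_irrefl 0 hi
  set Q : ℕ → (ℝ → Z) → Prop := fun i σ =>
    σ 0 = xs i ∧ σ 1 = ys i ∧
    (∀ s t : ℝ, dist (σ s) (σ t) ≤ (C * dist (xs i) (ys i)) * |s - t|) ∧
    (∀ t : ℝ, σ t ∈ Xs i) ∧
    (∀ t : ℝ, c * min (dist (xs i) (σ t)) (dist (σ t) (ys i))
      ≤ infDist (σ t) (Xs i \ Ωs i) + (1 + c) * (1/(i+1))) with hQdef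
  have hexist : ∀ᶠ i in Filter.atTop, ∃ σ : ℝ → Z, Q i σ := by
    filter_upwards [hxev, hyev] with i hxΩ hyΩ
    obtain ⟨γ', hγ'cont, hγ'0, hγ'1, hγ'mem, hγ'var, hγ'dist⟩ :=
      hunif i (xs i) hxΩ (ys i) hyΩ
    have hUC := (isCompact_Icc (a := (0:ℝ)) (b := 1)).uniformContinuousOn_of_continuous
      hγ'cont
    rw [Metric.uniformContinuousOn_iff] at hUC
    have hεpos : (0:ℝ) < 1/(i+1) := by positivity
    obtain ⟨δ, hδ, hδprop⟩ := hUC (1/(i+1)) hεpos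
    obtain ⟨n₀, hn₀⟩ := exists_nat_one_div_lt hδ
    set N : ℕ := n₀ + 1 with hNdef
    have hNpos : (0:ℝ) < (N : ℝ) := by positivity
    set tk : ℕ → ℝ := fun k => min ((k : ℝ) / (N : ℝ)) 1 with htkdef
    have htkmem : ∀ k, tk k ∈ Set.Icc (0:ℝ) 1 := fun k =>
      ⟨le_min (by positivity) zero_le_one, min_le_right _ _⟩
    have htkmono : Monotone tk := fun a b hab => by
      simp only [htkdef]
      exact min_le_min ((div_le_div_iff_of_pos_right hNpos).2 (by exact_mod_cast hab)) le_rfl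
    set p : ℕ → Z := fun k => γ' (tk k) with hpdef
    have hcons : ∀ k : ℕ, dist (p k) (p (k+1)) ≤ 1/(i+1) := by
      intro k
      have hd : dist (tk k) (tk (k+1)) < δ := by
        rw [Real.dist_eq]
        have h1 : |tk k - tk (k+1)| ≤ |(k:ℝ)/(N:ℝ) - ((k:ℝ)+1)/(N:ℝ)| := by
          refine (abs_min_sub_min_le_max _ _ _ _).trans (max_le ?_ ?_)
          · norm_cast
          · simpa using abs_nonneg ((k:ℝ)/(N:ℝ) - ((k:ℝ)+1)/(N:ℝ))
        refine h1.trans_lt ?_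
        have h2 : (k:ℝ)/(N:ℝ) - ((k:ℝ)+1)/(N:ℝ) = -(1/(N:ℝ)) := by
          field_simp
          ring
        rw [h2, abs_neg, abs_of_nonneg (by positivity)]
        have : (1:ℝ)/(N:ℝ) = 1/((n₀:ℝ)+1) := by rw [hNdef]; push_cast; ring_nf
        rw [this]
        exact hn₀
      exact (hδprop _ (htkmem k) _ (htkmem (k+1)) hd).le
    have hpW : ∀ k, p k ∈ Xs i := fun k => hΩsub i (hγ'mem _ (htkmem k))
    obtain ⟨G, hGlip, hG0, hGT, hGprop⟩ := exists_chain (Xs i) (hgeo i) p hpW N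
    set T : ℝ := ∑ k ∈ Finset.range N, dist (p k) (p (k+1)) with hTdef
    have hT0 : 0 ≤ T := Finset.sum_nonneg fun _ _ => dist_nonneg
    have hTle : T ≤ C * dist (xs i) (ys i) := by
      have hsum := eVariationOn.sum_le (f := γ') (n := N) htkmono (fun k => htkmem k)
      have hofT : ENNReal.ofReal T ≤ ENNReal.ofReal (C * dist (xs i) (ys i)) := by
        refine le_trans ?_ (hsum.trans hγ'var)
        rw [hTdef, ENNReal.ofReal_sum_of_nonneg (fun k _ => dist_nonneg)]
        refine le_of_eq (Finset.sum_congr rfl fun k _ => ?_)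
        rw [edist_dist, dist_comm]
      exact (ENNReal.ofReal_le_ofReal_iff (by positivity)).1 hofT
    have htk0 : tk 0 = 0 := by simp [htkdef]
    have htkN : tk N = 1 := by
      simp only [htkdef]
      rw [div_self (ne_of_gt hNpos)]
      exact min_self 1
    refine ⟨fun t => G (t * T), ?_, ?_, ?_, fun t => (hGprop _).1, ?_⟩
    · show G (0 * T) = xs i
      rw [zero_mul, hG0 0 le_rfl, hpdef]
      simp only [htk0]
      exact hγ'0
    · show G (1 * T) = ys i
      rw [one_mul, hGT T le_rfl, hpdef]
      simp only [htkN]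
      exact hγ'1
    · intro s t
      refine (hGlip _ _).trans ?_
      rw [show s*T - t*T = (s-t)*T by ring, abs_mul, abs_of_nonneg hT0,
        mul_comm (C * dist (xs i) (ys i))]
      exact mul_le_mul_of_nonneg_left hTle (abs_nonneg _)
    · intro t
      obtain ⟨-, k, hk⟩ := hGprop (t * T)
      have hk' : dist (G (t*T)) (p k) ≤ 1/(i+1) := hk.trans (hcons k)
      have hcond := hγ'dist (tk k) (htkmem k)
      have h1 : dist (xs i) (G (t*T)) ≤ dist (xs i) (p k) + 1/(i+1) := by
        calc dist (xs i) (G (t*T)) ≤ dist (xs i) (p k) + dist (p k) (G (t*T)) :=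
              dist_triangle _ _ _
          _ ≤ _ := by rw [dist_comm (p k) (G (t*T))]; linarith
      have h2 : dist (G (t*T)) (ys i) ≤ dist (p k) (ys i) + 1/(i+1) := by
        calc dist (G (t*T)) (ys i) ≤ dist (G (t*T)) (p k) + dist (p k) (ys i) :=
              dist_triangle _ _ _
          _ ≤ _ := by linarith
      have h3 : min (dist (xs i) (G (t*T))) (dist (G (t*T)) (ys i))
          ≤ min (dist (xs i) (p k)) (dist (p k) (ys i)) + 1/(i+1) :=
        le_trans (min_le_min h1 h2) (le_of_eq (min_add_add_right _ _ _))
      have h4 : infDist (p k) (Xs i \ Ωs i) ≤ infDist (G (t*T)) (Xs i \ Ωs i) + 1/(i+1) := by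
        refine le_trans (infDist_le_infDist_add_dist (y := G (t*T))) ?_
        rw [dist_comm (p k) (G (t*T))]
        linarith
      have h5 := mul_le_mul_of_nonneg_left h3 hc.le
      rw [mul_add] at h5
      have h6 : c * min (dist (xs i) (p k)) (dist (p k) (ys i))
          ≤ infDist (p k) (Xs i \ Ωs i) := by
        have := hcond
        rw [hpdef] at *
        exact hγ'dist (tk k) (htkmem k)
      linarith
  have hchoice : ∀ i, ∃ σ : ℝ → Z, (∃ σ', Q i σ') → Q i σ := fun i => by
    by_cases h : ∃ σ', Q i σ'
    · exact ⟨h.choose, fun _ => h.choose_spec⟩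
    · exact ⟨fun _ => xs i, fun hc' => absurd hc' h⟩
  choose σ hσ using hchoice
  have hQ : ∀ᶠ i in Filter.atTop, Q i (σ i) := hexist.mono fun i h => hσ i h
  have hQU : ∀ᶠ i in (𝒰 : Filter ℕ), Q i (σ i) := hQ.filter_mono hUle
  have hγex : ∀ t : ℝ, ∃ z : Z, Filter.Tendsto (fun i => σ i t) (𝒰 : Filter ℕ) (nhds z) :=
    fun t => hZlim _
  choose γ hγ using hγex
  have hxU : Filter.Tendsto xs (𝒰 : Filter ℕ) (nhds x) :=
    (tendsto_iff_dist_tendsto_zero.2 hxsd).mono_left hUle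
  have hyU : Filter.Tendsto ys (𝒰 : Filter ℕ) (nhds y) :=
    (tendsto_iff_dist_tendsto_zero.2 hysd).mono_left hUle
  have hdXY : Filter.Tendsto (fun i => dist (xs i) (ys i)) (𝒰 : Filter ℕ)
      (nhds (dist x y)) := hxU.dist hyU
  have hγ0 : γ 0 = x := by
    refine tendsto_nhds_unique (hγ 0) (hxU.congr' ?_)
    filter_upwards [hQU] with i h
    exact h.1.symm
  have hγ1 : γ 1 = y := by
    refine tendsto_nhds_unique (hγ 1) (hyU.congr' ?_)
    filter_upwards [hQU] with i h
    exact h.2.1.symm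
  have hK0 : 0 ≤ C * dist x y := by positivity
  have hγlip : ∀ s t : ℝ, dist (γ s) (γ t) ≤ (C * dist x y) * |s - t| := by
    intro s t
    refine le_of_tendsto_of_tendsto ((hγ s).dist (hγ t))
      ((hdXY.const_mul C).mul_const |s - t|) ?_
    filter_upwards [hQU] with i h
    exact h.2.2.1 s t
  have hγcont : Continuous γ := by
    have : LipschitzWith (Real.toNNReal (C * dist x y)) γ :=
      LipschitzWith.of_dist_le' (fun a b =>
        le_trans (hγlip a b) (le_of_eq (by rw [Real.dist_eq])))
    exact this.continuous
  have hγX : ∀ t : ℝ, γ t ∈ X := fun t =>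
    hmemX _ (by filter_upwards [hQU] with i h; exact h.2.2.2.1 t) _ (hγ t)
  have hσdist : ∀ t, Filter.Tendsto (fun i => dist (σ i t) (γ t)) (𝒰 : Filter ℕ)
      (nhds 0) := fun t => tendsto_iff_dist_tendsto_zero.1 (hγ t)
  have hkey : ∀ t : ℝ, c * min (dist x (γ t)) (dist (γ t) y) ≤ u (γ t) := by
    intro t
    have hlim : Filter.Tendsto (fun i => infDist (σ i t) (Xs i \ Ωs i)) (𝒰 : Filter ℕ)
        (nhds (u (γ t))) :=
      hulim (γ t) (hγX t) _ (by filter_upwards [hQU] with i h; exact h.2.2.2.1 t)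
        (hσdist t)
    have hL : Filter.Tendsto
        (fun i => c * min (dist (xs i) (σ i t)) (dist (σ i t) (ys i))) (𝒰 : Filter ℕ)
        (nhds (c * min (dist x (γ t)) (dist (γ t) y))) :=
      ((hxU.dist (hγ t)).min ((hγ t).dist hyU)).const_mul c
    have hR : Filter.Tendsto
        (fun i => infDist (σ i t) (Xs i \ Ωs i) + (1+c) * (1/((i:ℝ)+1))) (𝒰 : Filter ℕ)
        (nhds (u (γ t) + 0)) :=
      hlim.add (by
        have h0 := (tendsto_one_div_add_atTop_nhds_zero_nat.const_mul (1+c)).mono_left hUle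
        rwa [mul_zero] at h0)
    rw [add_zero] at hR
    refine le_of_tendsto_of_tendsto hL hR ?_
    filter_upwards [hQU] with i h
    exact h.2.2.2.2 t
  have hγΩ : ∀ t ∈ Set.Icc (0:ℝ) 1, γ t ∈ {z ∈ X | 0 < u z} := by
    intro t _
    refine ⟨hγX t, ?_⟩
    rcases eq_or_ne (γ t) x with h | hgx
    · rw [h]; exact hux
    rcases eq_or_ne (γ t) y with h | hgy
    · rw [h]; exact huy
    have hm : 0 < min (dist x (γ t)) (dist (γ t) y) :=
      lt_min (dist_pos.2 (fun h => hgx h.symm)) (dist_pos.2 hgy)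
    exact lt_of_lt_of_le (mul_pos hc hm) (hkey t)
  refine ⟨γ, hγcont.continuousOn, hγ0, hγ1, hγΩ, ?_, ?_⟩
  · exact evar_le_of_lip hK0 (fun s _ t _ => hγlip s t)
  · intro t _
    refine (hkey t).trans ?_
    by_contra hcon
    rw [not_le] at hcon
    obtain ⟨z, hz, hdz⟩ := (infDist_lt_iff part1).1 hcon
    have h1 : u (γ t) ≤ u z + dist (γ t) z := hulip _ (hγX t) z hz.1
    have h2 : u z ≤ 0 := by
      by_contra h
      exact hz.2 ⟨hz.1, lt_of_not_ge h⟩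
    linarith
end

section
/- In the ambient Hausdorff convergence setting, assume in addition that each X_i is geodesic: any two points x,y ∈ X_i are joined by a unit-speed geodesic in X_i, i.e. a map γ:[0,d(x,y)]→X_i with γ(0)=x, γ(d(x,y))=y and d(γ(s),γ(t))=|s−t|. Let δ > 0, let Ω_i ⊂ X_i be relatively open with Ω_i ≠ ∅ and X_i∖Ω_i ≠ ∅, and assume each Ω_i satisfies both the δ-uniform outer ball condition and the δ-uniform inner ball condition in X_i. Let d_{S_i} := d_{cl_{X_i}(Ω_i)} − d_{X_i∖Ω_i} : X_i → ℝ be the signed distance functions, and assume d_{S_i} converges relative to Z to u : X → ℝ. Then, setting Ω := {x ∈ X : u(x) < 0}: Ω ≠ ∅, X∖Ω ≠ ∅, the zero set {x ∈ X : u(x) = 0} equals the boundary ∂Ω of Ω in X, and u(x) = d_{cl(Ω)}(x) − d_{X∖Ω}(x) for every x ∈ X, i.e. u is the signed distance function of ∂Ω. -/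
open Metric Set Filter

/-- `Ω` satisfies the `δ`-uniform outer ball condition in the (closed) metric subspace
`Y`: every point of the relative boundary of `Ω` in `Y` is touched by a ball of radius
at least `δ` contained in `Y ∖ Ω`. -/
def OuterBallCond {Z : Type*} [MetricSpace Z] (δ : ℝ) (Y Ω : Set Z) : Prop :=
  ∀ x ∈ closure Ω ∩ closure (Y \ Ω), ∃ r ≥ δ, ∃ p ∈ Y \ Ω,
    dist x p = r ∧ ∀ z ∈ Y, dist z p < r → z ∈ Y \ Ω

/-- `Ω` satisfies the `δ`-uniform inner ball condition in the (closed) metric subspace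
`Y`. -/
def InnerBallCond {Z : Type*} [MetricSpace Z] (δ : ℝ) (Y Ω : Set Z) : Prop :=
  ∀ x ∈ closure Ω ∩ closure (Y \ Ω), ∃ r ≥ δ, ∃ p ∈ Ω,
    dist x p = r ∧ ∀ z ∈ Y, dist z p < r → z ∈ Ω

open Topology

section Aux

variable {Z : Type*} [MetricSpace Z]

lemma le_infDist' {s : Set Z} {x : Z} {b : ℝ} (hs : s.Nonempty)
    (h : ∀ y ∈ s, b ≤ dist x y) : b ≤ infDist x s :=
  le_of_not_gt fun hlt => by
    obtain ⟨y, hy, hd⟩ := (infDist_lt_iff hs).1 hlt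
    exact absurd hd (not_lt.2 (h y hy))

/-- A geodesic from a point of `U ∩ K` to a point of `K \ (U ∩ K)` passes through a
point of the relative boundary. -/
lemma crossing {K U : Set Z} (hU : IsOpen U)
    {z w : Z} (hz : z ∈ U ∩ K) (hw : w ∈ K \ (U ∩ K))
    (γ : ℝ → Z) (h0 : γ 0 = z) (h1 : γ (dist z w) = w)
    (hKm : ∀ s ∈ Icc (0:ℝ) (dist z w), γ s ∈ K)
    (hiso : ∀ s ∈ Icc (0:ℝ) (dist z w), ∀ t ∈ Icc (0:ℝ) (dist z w),
      dist (γ s) (γ t) = |s - t|) :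
    ∃ p ∈ closure (U ∩ K) ∩ (K \ (U ∩ K)), dist z p + dist p w = dist z w := by
  set L := dist z w with hL
  have hL0 : 0 ≤ L := dist_nonneg
  set T : Set ℝ := {t | t ∈ Icc 0 L ∧ ∀ s ∈ Icc (0:ℝ) t, γ s ∈ U ∩ K} with hT
  have h0T : (0:ℝ) ∈ T := by
    refine ⟨⟨le_refl _, hL0⟩, fun s hs => ?_⟩
    have hs0 : s = 0 := le_antisymm hs.2 hs.1
    rw [hs0, h0]; exact hz
  have hbdd : BddAbove T := ⟨L, fun t ht => ht.1.2⟩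
  set c := sSup T with hc
  have hc0 : 0 ≤ c := le_csSup hbdd h0T
  have hcL : c ≤ L := csSup_le ⟨0, h0T⟩ fun t ht => ht.1.2
  have hcI : c ∈ Icc (0:ℝ) L := ⟨hc0, hcL⟩
  have hltc : ∀ s, 0 ≤ s → s < c → γ s ∈ U ∩ K := by
    intro s hs0 hsc
    obtain ⟨t, htT, hst⟩ := exists_lt_of_lt_csSup ⟨0, h0T⟩ hsc
    exact htT.2 s ⟨hs0, hst.le⟩
  have hcl : γ c ∈ closure (U ∩ K) := by
    rw [Metric.mem_closure_iff]
    intro ε hε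
    rcases le_or_gt c (ε/2) with h | h
    · refine ⟨z, hz, ?_⟩
      have hd : dist (γ c) (γ 0) = |c - 0| := hiso c hcI 0 ⟨le_rfl, hL0⟩
      rw [h0] at hd
      rw [hd, sub_zero, abs_of_nonneg hc0]
      linarith
    · have hsI : c - ε/2 ∈ Icc (0:ℝ) L := ⟨by linarith, by linarith⟩
      refine ⟨γ (c - ε/2), hltc _ hsI.1 (by linarith), ?_⟩
      have hd : dist (γ c) (γ (c - ε/2)) = |c - (c - ε/2)| := hiso c hcI _ hsI
      rw [hd, abs_of_nonneg (by linarith)]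
      linarith
  have hnotU : γ c ∉ U ∩ K := by
    intro hin
    have hcLlt : c < L := by
      rcases lt_or_eq_of_le hcL with h | h
      · exact h
      · exfalso; rw [h, h1] at hin; exact hw.2 hin
    obtain ⟨ε, hε, hball⟩ := Metric.isOpen_iff.1 hU (γ c) hin.1
    set t' := min (c + ε/2) L with ht'
    have htc : c < t' := lt_min (by linarith) hcLlt
    have ht'I : t' ∈ Icc (0:ℝ) L := ⟨le_trans hc0 htc.le, min_le_right _ _⟩
    have ht'T : t' ∈ T := by
      refine ⟨ht'I, fun s hs => ?_⟩
      rcases lt_or_ge s c with h | h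
      · exact hltc s hs.1 h
      · have hsI : s ∈ Icc (0:ℝ) L := ⟨hs.1, le_trans hs.2 ht'I.2⟩
        have hd : dist (γ s) (γ c) = |s - c| := hiso s hsI c hcI
        have hst' : s ≤ c + ε/2 := le_trans hs.2 (min_le_left _ _)
        have hγsU : γ s ∈ U := by
          apply hball
          rw [mem_ball, hd, abs_of_nonneg (by linarith)]
          linarith
        exact ⟨hγsU, hKm s hsI⟩
    exact absurd (le_csSup hbdd ht'T) (not_le.2 htc)
  refine ⟨γ c, ⟨hcl, hKm c hcI, hnotU⟩, ?_⟩
  have d1 : dist z (γ c) = c := by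
    have hd := hiso 0 ⟨le_rfl, hL0⟩ c hcI
    rw [h0] at hd
    rw [hd, zero_sub, abs_neg, abs_of_nonneg hc0]
  have d2 : dist (γ c) w = L - c := by
    have hd := hiso c hcI L ⟨hL0, le_rfl⟩
    rw [h1] at hd
    rw [hd, abs_of_nonpos (by linarith), neg_sub]
  rw [d1, d2]; ring

/-- From a relative boundary point, move distance `ε` along a geodesic towards the
center of the inner ball: one obtains a point of `Ω` at distance at least `ε` from
the complement. -/
lemma inner_point {δ : ℝ} {K Ω : Set Z}
    (hgeo : ∀ x ∈ K, ∀ y ∈ K, ∃ γ : ℝ → Z, γ 0 = x ∧ γ (dist x y) = y ∧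
      (∀ s ∈ Icc (0:ℝ) (dist x y), γ s ∈ K) ∧
      ∀ s ∈ Icc (0:ℝ) (dist x y), ∀ t ∈ Icc (0:ℝ) (dist x y),
        dist (γ s) (γ t) = |s - t|)
    (hΩK : Ω ⊆ K) (hib : InnerBallCond δ K Ω)
    {s : Z} (hs : s ∈ closure Ω ∩ (K \ Ω)) {ε : ℝ} (hε : 0 < ε) (hεδ : ε ≤ δ) :
    ∃ q ∈ Ω, dist s q = ε ∧ ∀ w ∈ K \ Ω, ε ≤ dist q w := by
  obtain ⟨r, hrδ, p, hpΩ, hdsp, hball⟩ := hib s ⟨hs.1, subset_closure hs.2⟩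
  have hsK : s ∈ K := hs.2.1
  have hpK : p ∈ K := hΩK hpΩ
  obtain ⟨γ, h0, h1, hKm, hiso⟩ := hgeo s hsK p hpK
  have hεr : ε ≤ r := le_trans hεδ hrδ
  have hεI : ε ∈ Icc (0:ℝ) (dist s p) := ⟨hε.le, by rw [hdsp]; exact hεr⟩
  have h0I : (0:ℝ) ∈ Icc (0:ℝ) (dist s p) := ⟨le_rfl, dist_nonneg⟩
  have hLI : dist s p ∈ Icc (0:ℝ) (dist s p) := ⟨dist_nonneg, le_rfl⟩
  have hdq : dist s (γ ε) = ε := by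
    have hd := hiso 0 h0I ε hεI
    rw [h0] at hd
    rw [hd, zero_sub, abs_neg, abs_of_nonneg hε.le]
  have hdqp : dist (γ ε) p = r - ε := by
    have hd := hiso ε hεI (dist s p) hLI
    rw [h1] at hd
    rw [hd, hdsp, abs_of_nonpos (by linarith), neg_sub]
  have hqK : γ ε ∈ K := hKm ε hεI
  have hqΩ : γ ε ∈ Ω := hball (γ ε) hqK (by rw [hdqp]; linarith)
  refine ⟨γ ε, hqΩ, hdq, fun w hw => ?_⟩
  have hwp : r ≤ dist w p := by
    by_contra h
    exact hw.2 (hball w hw.1 (not_le.1 h))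
  have htri : dist w p ≤ dist w (γ ε) + dist (γ ε) p := dist_triangle _ _ _
  have : dist (γ ε) w = dist w (γ ε) := dist_comm _ _
  linarith

end Aux

/-- In the ambient Hausdorff convergence setting with geodesic `X i`,
if each `Ω i` is relatively open, nonempty with nonempty complement, satisfies the
`δ`-uniform inner and outer ball conditions, and the signed distance functions
`d_{S_i} = d_{cl Ω_i} - d_{X_i ∖ Ω_i}` converge relative to `Z` to `u`, then, with
`Ω := {x ∈ X | u x < 0}`: `Ω` and `X ∖ Ω` are nonempty, the zero set of `u` in `X` is
the relative boundary of `Ω` in `X`, and `u` is the signed distance function of `∂Ω`. -/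
theorem signed_distance_stability {Z : Type*} [MetricSpace Z] [CompactSpace Z]
    (Xs : ℕ → Set Z) (X : Set Z)
    (hXsc : ∀ i, IsCompact (Xs i)) (hXsne : ∀ i, (Xs i).Nonempty)
    (hXc : IsCompact X) (hXne : X.Nonempty)
    (hH : Filter.Tendsto (fun i => hausdorffDist (Xs i) X) Filter.atTop (nhds 0))
    (hgeo : ∀ i, ∀ x ∈ Xs i, ∀ y ∈ Xs i, ∃ γ : ℝ → Z,
      γ 0 = x ∧ γ (dist x y) = y ∧
      (∀ s ∈ Set.Icc (0:ℝ) (dist x y), γ s ∈ Xs i) ∧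
      ∀ s ∈ Set.Icc (0:ℝ) (dist x y), ∀ t ∈ Set.Icc (0:ℝ) (dist x y),
        dist (γ s) (γ t) = |s - t|)
    (δ : ℝ) (hδ : 0 < δ)
    (Ωs : ℕ → Set Z)
    (hrelopen : ∀ i, ∃ U : Set Z, IsOpen U ∧ Ωs i = U ∩ Xs i)
    (hΩne : ∀ i, (Ωs i).Nonempty) (hAne : ∀ i, (Xs i \ Ωs i).Nonempty)
    (houter : ∀ i, OuterBallCond δ (Xs i) (Ωs i))
    (hinner : ∀ i, InnerBallCond δ (Xs i) (Ωs i))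
    (u : Z → ℝ)
    (hconv : ∀ x ∈ X, ∀ xs : ℕ → Z, (∀ i, xs i ∈ Xs i) →
      Filter.Tendsto (fun i => dist (xs i) x) Filter.atTop (nhds 0) →
      Filter.Tendsto
        (fun i => infDist (xs i) (closure (Ωs i)) - infDist (xs i) (Xs i \ Ωs i))
        Filter.atTop (nhds (u x))) :
    {x ∈ X | u x < 0}.Nonempty ∧
    (X \ {x ∈ X | u x < 0}).Nonempty ∧
    {x ∈ X | u x = 0} =
      closure {x ∈ X | u x < 0} ∩ closure (X \ {x ∈ X | u x < 0}) ∧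
    ∀ x ∈ X, u x = infDist x (closure {y ∈ X | u y < 0})
      - infDist x (X \ {y ∈ X | u y < 0}) := by
  classical
  choose U hUopen hUeq using hrelopen
  have hΩsub : ∀ i, Ωs i ⊆ Xs i := fun i => by rw [hUeq i]; exact inter_subset_right
  have hclΩsub : ∀ i, closure (Ωs i) ⊆ Xs i := fun i =>
    closure_minimal (hΩsub i) (hXsc i).isClosed
  have hCclosed : ∀ i, IsClosed (Xs i \ Ωs i) := by
    intro i
    have h : Xs i \ Ωs i = Xs i ∩ (U i)ᶜ := by
      rw [hUeq i]; ext x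
      simp only [mem_diff, mem_inter_iff, mem_compl_iff]
      tauto
    rw [h]
    exact (hXsc i).isClosed.inter (hUopen i).isClosed_compl
  have hScompact : ∀ i, IsCompact (closure (Ωs i) ∩ (Xs i \ Ωs i)) := fun i =>
    (isClosed_closure.inter (hCclosed i)).isCompact
  have hCcompact : ∀ i, IsCompact (Xs i \ Ωs i) := fun i => (hCclosed i).isCompact
  have hclΩcompact : ∀ i, IsCompact (closure (Ωs i)) := fun i =>
    isClosed_closure.isCompact
  have hclΩne : ∀ i, (closure (Ωs i)).Nonempty := fun i => (hΩne i).closure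
  -- a geodesic joining a point of `Ωs i` to a point of the complement crosses the
  -- relative boundary
  have hcross : ∀ i, ∀ z ∈ Ωs i, ∀ w ∈ Xs i \ Ωs i,
      ∃ p ∈ closure (Ωs i) ∩ (Xs i \ Ωs i), dist z p + dist p w = dist z w := by
    intro i z hz w hw
    obtain ⟨γ, h0, h1, hKm, hiso⟩ := hgeo i z (hΩsub i hz) w hw.1
    rw [hUeq i] at hz hw ⊢
    exact crossing (hUopen i) hz hw γ h0 h1 hKm hiso
  have hSne : ∀ i, (closure (Ωs i) ∩ (Xs i \ Ωs i)).Nonempty := by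
    intro i
    obtain ⟨z, hz⟩ := hΩne i
    obtain ⟨w, hw⟩ := hAne i
    obtain ⟨p, hp, -⟩ := hcross i z hz w hw
    exact ⟨p, hp⟩
  -- the absolute value of the signed distance is the distance to the relative boundary
  have habs : ∀ i, ∀ z ∈ Xs i,
      |infDist z (closure (Ωs i)) - infDist z (Xs i \ Ωs i)|
        = infDist z (closure (Ωs i) ∩ (Xs i \ Ωs i)) := by
    intro i z hzX
    by_cases hz : z ∈ Ωs i
    · have h1 : infDist z (closure (Ωs i)) = 0 := infDist_zero_of_mem (subset_closure hz)
      have h2 : infDist z (Xs i \ Ωs i)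
          = infDist z (closure (Ωs i) ∩ (Xs i \ Ωs i)) := by
        refine le_antisymm (infDist_le_infDist_of_subset inter_subset_right (hSne i)) ?_
        obtain ⟨w, hw, hwd⟩ := (hCcompact i).exists_infDist_eq_dist (hAne i) z
        obtain ⟨p, hp, hpd⟩ := hcross i z hz w hw
        have hpw : dist z p ≤ dist z w := by
          have hnn : (0:ℝ) ≤ dist p w := dist_nonneg
          linarith
        calc infDist z (closure (Ωs i) ∩ (Xs i \ Ωs i)) ≤ dist z p :=
              infDist_le_dist_of_mem hp
          _ ≤ dist z w := hpw
          _ = infDist z (Xs i \ Ωs i) := hwd.symm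
      rw [h1, h2, zero_sub, abs_neg, abs_of_nonneg infDist_nonneg]
    · have hzC : z ∈ Xs i \ Ωs i := ⟨hzX, hz⟩
      have h1 : infDist z (Xs i \ Ωs i) = 0 := infDist_zero_of_mem hzC
      have h2 : infDist z (closure (Ωs i))
          = infDist z (closure (Ωs i) ∩ (Xs i \ Ωs i)) := by
        refine le_antisymm (infDist_le_infDist_of_subset inter_subset_left (hSne i)) ?_
        obtain ⟨y, hy, hyd⟩ := (hclΩcompact i).exists_infDist_eq_dist (hclΩne i) z
        by_cases hyΩ : y ∈ Ωs i
        · obtain ⟨p, hp, hpd⟩ := hcross i y hyΩ z hzC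
          have hzp : dist z p ≤ dist z y := by
            have hnn : (0:ℝ) ≤ dist y p := dist_nonneg
            rw [dist_comm z p, dist_comm z y]
            linarith
          calc infDist z (closure (Ωs i) ∩ (Xs i \ Ωs i)) ≤ dist z p :=
                infDist_le_dist_of_mem hp
            _ ≤ dist z y := hzp
            _ = infDist z (closure (Ωs i)) := hyd.symm
        · have hyS : y ∈ closure (Ωs i) ∩ (Xs i \ Ωs i) := ⟨hy, hclΩsub i hy, hyΩ⟩
          calc infDist z (closure (Ωs i) ∩ (Xs i \ Ωs i)) ≤ dist z y :=
                infDist_le_dist_of_mem hyS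
            _ = infDist z (closure (Ωs i)) := hyd.symm
      rw [h1, h2, sub_zero, abs_of_nonneg infDist_nonneg]
  -- the signed distance functions are 1-Lipschitz
  have hone : ∀ i, ∀ z ∈ Xs i, ∀ w ∈ Xs i,
      (infDist z (closure (Ωs i)) - infDist z (Xs i \ Ωs i))
        - (infDist w (closure (Ωs i)) - infDist w (Xs i \ Ωs i)) ≤ dist z w := by
    intro i z hzX w hwX
    by_cases hz : z ∈ Ωs i <;> by_cases hw : w ∈ Ωs i
    · have h1 : infDist z (closure (Ωs i)) = 0 := infDist_zero_of_mem (subset_closure hz)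
      have h2 : infDist w (closure (Ωs i)) = 0 := infDist_zero_of_mem (subset_closure hw)
      have h3 : infDist w (Xs i \ Ωs i) ≤ infDist z (Xs i \ Ωs i) + dist w z :=
        infDist_le_infDist_add_dist
      rw [dist_comm w z] at h3
      rw [h1, h2]
      linarith
    · have h1 : infDist z (closure (Ωs i)) = 0 := infDist_zero_of_mem (subset_closure hz)
      have h2 : infDist w (Xs i \ Ωs i) = 0 := infDist_zero_of_mem ⟨hwX, hw⟩
      have h3 : (0:ℝ) ≤ infDist z (Xs i \ Ωs i) := infDist_nonneg
      have h4 : (0:ℝ) ≤ infDist w (closure (Ωs i)) := infDist_nonneg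
      have h5 : (0:ℝ) ≤ dist z w := dist_nonneg
      rw [h1, h2]
      linarith
    · have hzC : z ∈ Xs i \ Ωs i := ⟨hzX, hz⟩
      have h1 : infDist z (Xs i \ Ωs i) = 0 := infDist_zero_of_mem hzC
      have h2 : infDist w (closure (Ωs i)) = 0 := infDist_zero_of_mem (subset_closure hw)
      obtain ⟨p, hp, hpd⟩ := hcross i w hw z hzC
      have ha : infDist z (closure (Ωs i)) ≤ dist p z := by
        rw [dist_comm]; exact infDist_le_dist_of_mem hp.1
      have hb : infDist w (Xs i \ Ωs i) ≤ dist w p := infDist_le_dist_of_mem hp.2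
      have hcm : dist z w = dist w z := dist_comm _ _
      rw [h1, h2]
      linarith
    · have h1 : infDist z (Xs i \ Ωs i) = 0 := infDist_zero_of_mem ⟨hzX, hz⟩
      have h2 : infDist w (Xs i \ Ωs i) = 0 := infDist_zero_of_mem ⟨hwX, hw⟩
      have h3 : infDist z (closure (Ωs i)) ≤ infDist w (closure (Ωs i)) + dist z w :=
        infDist_le_infDist_add_dist
      rw [h1, h2]
      linarith
  have hlip : ∀ i, ∀ z ∈ Xs i, ∀ w ∈ Xs i,
      |(infDist z (closure (Ωs i)) - infDist z (Xs i \ Ωs i))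
        - (infDist w (closure (Ωs i)) - infDist w (Xs i \ Ωs i))| ≤ dist z w := by
    intro i z hz w hw
    rw [abs_sub_le_iff]
    refine ⟨hone i z hz w hw, ?_⟩
    have h := hone i w hw z hz
    rwa [dist_comm w z] at h
  have hfin : ∀ i, EMetric.hausdorffEdist (Xs i) X ≠ ⊤ := fun i =>
    hausdorffEdist_ne_top_of_nonempty_of_bounded (hXsne i) hXne (hXsc i).isBounded
      hXc.isBounded
  have hfin' : ∀ i, EMetric.hausdorffEdist X (Xs i) ≠ ⊤ := fun i => by
    exact EMetric.hausdorffEdist_comm.trans_ne (hfin i)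
  have hH' : Tendsto (fun i => hausdorffDist X (Xs i)) atTop (𝓝 0) := by
    have h : (fun i => hausdorffDist X (Xs i)) = fun i => hausdorffDist (Xs i) X :=
      funext fun i => hausdorffDist_comm
    rw [h]; exact hH
  -- projections onto the `Xs i`
  have hproj : ∀ x ∈ X, ∃ xs : ℕ → Z, (∀ i, xs i ∈ Xs i) ∧
      Tendsto (fun i => dist (xs i) x) atTop (𝓝 0) := by
    intro x hx
    choose xs hxs hdx using fun i => (hXsc i).exists_infDist_eq_dist (hXsne i) x
    refine ⟨xs, hxs, ?_⟩
    have hb : ∀ i, dist (xs i) x ≤ hausdorffDist X (Xs i) := by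
      intro i
      rw [dist_comm, ← hdx i]
      exact infDist_le_hausdorffDist_of_mem hx (hfin' i)
    exact squeeze_zero (fun i => dist_nonneg) hb hH'
  -- the key extraction lemma
  have hextract : ∀ z : ℕ → Z, (∀ i, z i ∈ Xs i) →
      ∃ x ∈ X, ∃ φ : ℕ → ℕ, StrictMono φ ∧
        Tendsto (fun k => z (φ k)) atTop (𝓝 x) ∧
        Tendsto (fun k => infDist (z (φ k)) (closure (Ωs (φ k)))
          - infDist (z (φ k)) (Xs (φ k) \ Ωs (φ k))) atTop (𝓝 (u x)) := by
    intro z hz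
    obtain ⟨x, φ, hφ, hzx⟩ := CompactSpace.tendsto_subseq z
    have hφt : Tendsto φ atTop atTop := hφ.tendsto_atTop
    have hdzx : Tendsto (fun k => dist (z (φ k)) x) atTop (𝓝 0) :=
      tendsto_iff_dist_tendsto_zero.1 hzx
    have hdzx' : Tendsto (fun k => dist x (z (φ k))) atTop (𝓝 0) := by
      simpa only [dist_comm] using hdzx
    have hxX : x ∈ X := by
      have h1 : ∀ k, infDist x X ≤ hausdorffDist (Xs (φ k)) X + dist x (z (φ k)) := by
        intro k
        calc infDist x X ≤ infDist (z (φ k)) X + dist x (z (φ k)) :=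
              infDist_le_infDist_add_dist
          _ ≤ hausdorffDist (Xs (φ k)) X + dist x (z (φ k)) :=
              add_le_add_left
                (infDist_le_hausdorffDist_of_mem (hz (φ k)) (hfin (φ k))) _
      have h2 : Tendsto (fun k => hausdorffDist (Xs (φ k)) X + dist x (z (φ k)))
          atTop (𝓝 0) := by
        have := (hH.comp hφt).add hdzx'
        simpa using this
      have h3 : infDist x X ≤ 0 := ge_of_tendsto h2 (Eventually.of_forall h1)
      have h4 : infDist x X = 0 := le_antisymm h3 infDist_nonneg
      exact (hXc.isClosed.mem_iff_infDist_zero hXne).2 h4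
    obtain ⟨ys, hys, hysx⟩ := hproj x hxX
    have hmain := hconv x hxX ys hys hysx
    have hmainφ : Tendsto (fun k => infDist (ys (φ k)) (closure (Ωs (φ k)))
        - infDist (ys (φ k)) (Xs (φ k) \ Ωs (φ k))) atTop (𝓝 (u x)) := hmain.comp hφt
    have hdiff : Tendsto (fun k =>
        (infDist (z (φ k)) (closure (Ωs (φ k))) - infDist (z (φ k)) (Xs (φ k) \ Ωs (φ k)))
        - (infDist (ys (φ k)) (closure (Ωs (φ k)))
          - infDist (ys (φ k)) (Xs (φ k) \ Ωs (φ k)))) atTop (𝓝 0) := by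
      have hg : Tendsto (fun k => dist (z (φ k)) x + dist (ys (φ k)) x)
          atTop (𝓝 0) := by
        have := hdzx.add (hysx.comp hφt)
        simpa using this
      refine squeeze_zero_norm (fun k => ?_) hg
      rw [Real.norm_eq_abs]
      calc |(infDist (z (φ k)) (closure (Ωs (φ k)))
              - infDist (z (φ k)) (Xs (φ k) \ Ωs (φ k)))
            - (infDist (ys (φ k)) (closure (Ωs (φ k)))
              - infDist (ys (φ k)) (Xs (φ k) \ Ωs (φ k)))|
          ≤ dist (z (φ k)) (ys (φ k)) := hlip (φ k) _ (hz (φ k)) _ (hys (φ k))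
        _ ≤ dist (z (φ k)) x + dist (ys (φ k)) x := dist_triangle_right _ _ _
    refine ⟨x, hxX, φ, hφ, hzx, ?_⟩
    have hsum := hmainφ.add hdiff
    rw [add_zero] at hsum
    have heq : (fun k => (infDist (ys (φ k)) (closure (Ωs (φ k)))
        - infDist (ys (φ k)) (Xs (φ k) \ Ωs (φ k)))
        + ((infDist (z (φ k)) (closure (Ωs (φ k)))
            - infDist (z (φ k)) (Xs (φ k) \ Ωs (φ k)))
          - (infDist (ys (φ k)) (closure (Ωs (φ k)))
            - infDist (ys (φ k)) (Xs (φ k) \ Ωs (φ k)))))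
        = fun k => infDist (z (φ k)) (closure (Ωs (φ k)))
          - infDist (z (φ k)) (Xs (φ k) \ Ωs (φ k)) := by
      funext k; ring
    rwa [heq] at hsum
  -- `u` is 1-Lipschitz on `X`
  have hulip : ∀ x ∈ X, ∀ y ∈ X, |u x - u y| ≤ dist x y := by
    intro x hx y hy
    obtain ⟨xs, hxs, hxsx⟩ := hproj x hx
    obtain ⟨ys, hys, hysy⟩ := hproj y hy
    have h1 := hconv x hx xs hxs hxsx
    have h2 := hconv y hy ys hys hysy
    have h3 := (h1.sub h2).abs
    have h4 : Tendsto (fun i => dist (xs i) x + (dist x y + dist y (ys i)))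
        atTop (𝓝 (0 + (dist x y + 0))) := by
      refine hxsx.add (Tendsto.add tendsto_const_nhds ?_)
      simpa only [dist_comm] using hysy
    rw [zero_add, add_zero] at h4
    refine le_of_tendsto_of_tendsto' h3 h4 fun i => ?_
    calc |(infDist (xs i) (closure (Ωs i)) - infDist (xs i) (Xs i \ Ωs i))
          - (infDist (ys i) (closure (Ωs i)) - infDist (ys i) (Xs i \ Ωs i))|
        ≤ dist (xs i) (ys i) := hlip i _ (hxs i) _ (hys i)
      _ ≤ dist (xs i) x + dist x (ys i) := dist_triangle _ _ _
      _ ≤ dist (xs i) x + (dist x y + dist y (ys i)) := by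
          exact add_le_add_right (dist_triangle _ _ _) _
  -- every point of `X` has a zero of `u` at distance at most `|u x|`
  have hB : ∀ x ∈ X, ∃ s ∈ X, u s = 0 ∧ dist x s ≤ |u x| := by
    intro x hx
    obtain ⟨xs, hxs, hxsx⟩ := hproj x hx
    have hux := hconv x hx xs hxs hxsx
    choose t ht htd using fun i => (hScompact i).exists_infDist_eq_dist (hSne i) (xs i)
    have htX : ∀ i, t i ∈ Xs i := fun i => (ht i).2.1
    obtain ⟨s, hsX, φ, hφ, hts, htd2⟩ := hextract t htX
    have hzero : ∀ k, infDist (t (φ k)) (closure (Ωs (φ k)))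
        - infDist (t (φ k)) (Xs (φ k) \ Ωs (φ k)) = 0 := by
      intro k
      rw [infDist_zero_of_mem (ht (φ k)).1, infDist_zero_of_mem (ht (φ k)).2, sub_zero]
    have hus : u s = 0 := by
      have h0 : Tendsto (fun k => infDist (t (φ k)) (closure (Ωs (φ k)))
          - infDist (t (φ k)) (Xs (φ k) \ Ωs (φ k))) atTop (𝓝 0) := by
        simp only [hzero]
        exact tendsto_const_nhds
      exact tendsto_nhds_unique htd2 h0
    have hd1 : Tendsto (fun k => dist (xs (φ k)) (t (φ k))) atTop (𝓝 (dist x s)) :=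
      Tendsto.dist (tendsto_iff_dist_tendsto_zero.2 (hxsx.comp hφ.tendsto_atTop)) hts
    have hd2 : Tendsto (fun k => dist (xs (φ k)) (t (φ k))) atTop (𝓝 |u x|) := by
      have heq : ∀ k, |infDist (xs (φ k)) (closure (Ωs (φ k)))
          - infDist (xs (φ k)) (Xs (φ k) \ Ωs (φ k))| = dist (xs (φ k)) (t (φ k)) :=
        fun k => (habs (φ k) _ (hxs (φ k))).trans (htd (φ k))
      have habs2 := (hux.comp hφ.tendsto_atTop).abs
      simp only [Function.comp_def] at habs2
      simpa only [heq] using habs2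
    have hds : dist x s = |u x| := tendsto_nhds_unique hd1 hd2
    exact ⟨s, hsX, hus, le_of_eq hds⟩
  -- deep interior points near any boundary point
  have hq : ∀ i, ∀ s ∈ closure (Ωs i) ∩ (Xs i \ Ωs i), ∀ ε : ℝ, 0 < ε → ε ≤ δ →
      ∃ q ∈ Xs i, dist s q = ε ∧
        infDist q (closure (Ωs i)) - infDist q (Xs i \ Ωs i) ≤ -ε := by
    intro i s hs ε hε hεδ
    obtain ⟨q, hqΩ, hdq, hqw⟩ := inner_point (hgeo i) (hΩsub i) (hinner i) hs hε hεδ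
    refine ⟨q, hΩsub i hqΩ, hdq, ?_⟩
    have h1 : infDist q (closure (Ωs i)) = 0 := infDist_zero_of_mem (subset_closure hqΩ)
    have h2 : ε ≤ infDist q (Xs i \ Ωs i) := le_infDist' (hAne i) hqw
    linarith
  -- a point with `u < 0`
  have hΩpt : ∃ p ∈ X, u p < 0 := by
    choose s hsS using hSne
    have hqi : ∀ i, ∃ q ∈ Xs i, dist (s i) q = δ ∧
        infDist q (closure (Ωs i)) - infDist q (Xs i \ Ωs i) ≤ -δ :=
      fun i => hq i (s i) (hsS i) δ hδ le_rfl
    choose q hqX hqd hqD using hqi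
    obtain ⟨p, hpX, φ, hφ, hqp, hqDt⟩ := hextract q hqX
    have hup : u p ≤ -δ :=
      le_of_tendsto hqDt (Eventually.of_forall fun k => hqD (φ k))
    exact ⟨p, hpX, lt_of_le_of_lt hup (by linarith)⟩
  -- zeros of `u` are approximated by points with `u < 0`
  have hCC : ∀ x ∈ X, u x = 0 → ∀ ε : ℝ, 0 < ε → ε ≤ δ →
      ∃ y ∈ X, u y < 0 ∧ dist x y ≤ ε := by
    intro x hx hux0 ε hε hεδ
    obtain ⟨xs, hxs, hxsx⟩ := hproj x hx
    have hux := hconv x hx xs hxs hxsx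
    choose t ht htd using fun i => (hScompact i).exists_infDist_eq_dist (hSne i) (xs i)
    have hqi : ∀ i, ∃ q ∈ Xs i, dist (t i) q = ε ∧
        infDist q (closure (Ωs i)) - infDist q (Xs i \ Ωs i) ≤ -ε :=
      fun i => hq i (t i) (ht i) ε hε hεδ
    choose q hqX hqd hqD using hqi
    obtain ⟨y, hyX, φ, hφ, hqy, hqDt⟩ := hextract q hqX
    have huy : u y ≤ -ε :=
      le_of_tendsto hqDt (Eventually.of_forall fun k => hqD (φ k))
    refine ⟨y, hyX, by linarith, ?_⟩
    have hda : Tendsto (fun k => dist (xs (φ k)) (q (φ k))) atTop (𝓝 (dist x y)) :=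
      Tendsto.dist (tendsto_iff_dist_tendsto_zero.2 (hxsx.comp hφ.tendsto_atTop)) hqy
    have hub : ∀ k, dist (xs (φ k)) (q (φ k)) ≤
        |infDist (xs (φ k)) (closure (Ωs (φ k)))
          - infDist (xs (φ k)) (Xs (φ k) \ Ωs (φ k))| + ε := by
      intro k
      calc dist (xs (φ k)) (q (φ k))
          ≤ dist (xs (φ k)) (t (φ k)) + dist (t (φ k)) (q (φ k)) := dist_triangle _ _ _
        _ = infDist (xs (φ k)) (closure (Ωs (φ k)) ∩ (Xs (φ k) \ Ωs (φ k))) + ε := by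
            rw [← htd (φ k), hqd (φ k)]
        _ = |infDist (xs (φ k)) (closure (Ωs (φ k)))
            - infDist (xs (φ k)) (Xs (φ k) \ Ωs (φ k))| + ε := by
            rw [habs (φ k) _ (hxs (φ k))]
    have hR : Tendsto (fun k => |infDist (xs (φ k)) (closure (Ωs (φ k)))
        - infDist (xs (φ k)) (Xs (φ k) \ Ωs (φ k))| + ε) atTop (𝓝 (|u x| + ε)) :=
      ((hux.comp hφ.tendsto_atTop).abs).add tendsto_const_nhds
    have hfinal := le_of_tendsto_of_tendsto' hda hR hub
    rw [hux0] at hfinal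
    simpa using hfinal
  -- assemble everything
  obtain ⟨p, hpX, hup⟩ := hΩpt
  have hΩXne : ({x ∈ X | u x < 0} : Set Z).Nonempty := ⟨p, hpX, hup⟩
  obtain ⟨s0, hs0X, hs0u, -⟩ := hB p hpX
  have hcompl_ne : (X \ {x ∈ X | u x < 0}).Nonempty :=
    ⟨s0, hs0X, fun h => by simpa [hs0u] using h.2⟩
  have hclosU : ∀ y ∈ closure {x ∈ X | u x < 0}, y ∈ X ∧ u y ≤ 0 := by
    intro y hy
    have hyX : y ∈ X :=
      closure_minimal (fun z hz => hz.1) hXc.isClosed hy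
    refine ⟨hyX, ?_⟩
    by_contra h
    push_neg at h
    obtain ⟨w, hw, hdw⟩ := Metric.mem_closure_iff.1 hy (u y) h
    have hl := hulip y hyX w hw.1
    have h2 : u w < 0 := hw.2
    have h3 : u y - u w ≤ |u y - u w| := le_abs_self _
    linarith
  have hclosC : ∀ y ∈ closure (X \ {x ∈ X | u x < 0}), y ∈ X ∧ 0 ≤ u y := by
    intro y hy
    have hyX : y ∈ X := closure_minimal diff_subset hXc.isClosed hy
    refine ⟨hyX, ?_⟩
    by_contra h
    push_neg at h
    obtain ⟨w, hw, hdw⟩ := Metric.mem_closure_iff.1 hy (-u y) (by linarith)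
    have hwX : w ∈ X := hw.1
    have hw0 : 0 ≤ u w := by
      by_contra h2
      push_neg at h2
      exact hw.2 ⟨hwX, h2⟩
    have hl := hulip y hyX w hwX
    have h3 : u w - u y ≤ |u y - u w| := by
      rw [abs_sub_comm]; exact le_abs_self _
    linarith
  have hbdry : {x ∈ X | u x = 0} =
      closure {x ∈ X | u x < 0} ∩ closure (X \ {x ∈ X | u x < 0}) := by
    ext x
    constructor
    · rintro ⟨hxX, hx0⟩
      constructor
      · rw [Metric.mem_closure_iff]
        intro ε hε
        obtain ⟨y, hyX, hyu, hyd⟩ := hCC x hxX hx0 (min (ε/2) δ)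
          (lt_min (by linarith) hδ) (min_le_right _ _)
        exact ⟨y, ⟨hyX, hyu⟩,
          lt_of_le_of_lt hyd (lt_of_le_of_lt (min_le_left _ _) (by linarith))⟩
      · exact subset_closure ⟨hxX, fun h => by simpa [hx0] using h.2⟩
    · rintro ⟨h1, h2⟩
      obtain ⟨hxX, hle⟩ := hclosU x h1
      obtain ⟨-, hge⟩ := hclosC x h2
      exact ⟨hxX, le_antisymm hle hge⟩
  refine ⟨hΩXne, hcompl_ne, hbdry, ?_⟩
  intro x hxX
  rcases lt_or_ge (u x) 0 with hx | hx
  · have h1 : infDist x (closure {y ∈ X | u y < 0}) = 0 :=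
      infDist_zero_of_mem (subset_closure ⟨hxX, hx⟩)
    have h2 : infDist x (X \ {y ∈ X | u y < 0}) = -u x := by
      refine le_antisymm ?_ ?_
      · obtain ⟨s, hsX, hsu, hsd⟩ := hB x hxX
        have hsmem : s ∈ X \ {y ∈ X | u y < 0} :=
          ⟨hsX, fun h => by simpa [hsu] using h.2⟩
        calc infDist x (X \ {y ∈ X | u y < 0}) ≤ dist x s :=
              infDist_le_dist_of_mem hsmem
          _ ≤ |u x| := hsd
          _ = -u x := abs_of_neg hx
      · refine le_infDist' hcompl_ne fun y hy => ?_
        have hyX : y ∈ X := hy.1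
        have hyu : 0 ≤ u y := by
          by_contra h
          push_neg at h
          exact hy.2 ⟨hyX, h⟩
        have hl := hulip x hxX y hyX
        have h3 : u y - u x ≤ |u x - u y| := by
          rw [abs_sub_comm]; exact le_abs_self _
        linarith
    rw [h1, h2]; ring
  · have h2 : infDist x (X \ {y ∈ X | u y < 0}) = 0 :=
      infDist_zero_of_mem ⟨hxX, fun h => absurd h.2 (not_lt.2 hx)⟩
    have h1 : infDist x (closure {y ∈ X | u y < 0}) = u x := by
      refine le_antisymm ?_ ?_
      · obtain ⟨s, hsX, hsu, hsd⟩ := hB x hxX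
        have hsmem : s ∈ closure {y ∈ X | u y < 0} := by
          have hs2 : s ∈ ({y ∈ X | u y = 0} : Set Z) := ⟨hsX, hsu⟩
          rw [hbdry] at hs2
          exact hs2.1
        calc infDist x (closure {y ∈ X | u y < 0}) ≤ dist x s :=
              infDist_le_dist_of_mem hsmem
          _ ≤ |u x| := hsd
          _ = u x := abs_of_nonneg hx
      · refine le_infDist' (hΩXne.mono subset_closure) fun y hy => ?_
        obtain ⟨hyX, hyu⟩ := hclosU y hy
        have hl := hulip x hxX y hyX
        have h3 : u x - u y ≤ |u x - u y| := le_abs_self _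
        linarith
    rw [h1, h2]; ring
end

section
/- Let Z be a compact metric space, and let μ_i (i ∈ ℕ) and μ be finite Borel measures on Z. Suppose for each i there exists a Borel measure π_i on Z×Z whose first marginal is μ_i and whose second marginal is μ, and numbers δ_i → 0 such that d_Z(x,y) ≤ δ_i for π_i-almost every (x,y). Let M ≥ 0 and let f_i, f : Z → ℝ be Borel measurable with |f_i| ≤ M and |f| ≤ M, and assume ε_i := sup{ |f_i(x) − f(y)| : x, y ∈ Z, d_Z(x,y) ≤ δ_i } → 0. Then for every continuous φ : Z → ℝ one has ∫ φ f_i dμ_i → ∫ φ f dμ, and moreover ∫ f_i² dμ_i → ∫ f² dμ. -/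
open MeasureTheory Filter Set

lemma aux_tendsto_integral_zero {W : Type*} [MeasurableSpace W]
    (ν : ℕ → Measure W) [hν : ∀ i, IsFiniteMeasure (ν i)] {V : ℝ}
    (hV : ∀ i, ((ν i) Set.univ).toReal ≤ V)
    (H : ℕ → W → ℝ) (e : ℕ → ℝ) (he0 : ∀ i, 0 ≤ e i)
    (he : Tendsto e atTop (nhds 0))
    (hb : ∀ i, ∀ᵐ p ∂(ν i), ‖H i p‖ ≤ e i) :
    Tendsto (fun i => ∫ p, H i p ∂(ν i)) atTop (nhds 0) := by
  refine squeeze_zero_norm' (Filter.Eventually.of_forall fun i =>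
      (norm_integral_le_of_norm_le_const (hb i)).trans
        (mul_le_mul_of_nonneg_left (hV i) (he0 i)))
    (by simpa using he.mul_const V)


/-- If finite measures `μ i` on a compact metric space are coupled
with `μ` by couplings concentrated on pairs at distance at most `δ i → 0`, and uniformly
bounded Borel functions `f i`, `g` satisfy
`sup{|f i x - g y| : d(x,y) ≤ δ i} → 0`, then `∫ φ f_i dμ_i → ∫ φ g dμ` for all
continuous `φ`, and `∫ f_i² dμ_i → ∫ g² dμ`. -/
theorem coupled_convergence_of_integrals {Z : Type*} [MetricSpace Z] [CompactSpace Z]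
    [MeasurableSpace Z] [BorelSpace Z]
    (μs : ℕ → Measure Z) (μ : Measure Z)
    (hfin : ∀ i, IsFiniteMeasure (μs i)) (hfinμ : IsFiniteMeasure μ)
    (π : ℕ → Measure (Z × Z))
    (hπ1 : ∀ i, (π i).map Prod.fst = μs i)
    (hπ2 : ∀ i, (π i).map Prod.snd = μ)
    (δ : ℕ → ℝ) (hδ : Filter.Tendsto δ Filter.atTop (nhds 0))
    (hae : ∀ i, ∀ᵐ p ∂(π i), dist p.1 p.2 ≤ δ i)
    (M : ℝ) (hM : 0 ≤ M)
    (f : ℕ → Z → ℝ) (g : Z → ℝ)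
    (hfm : ∀ i, Measurable (f i)) (hgm : Measurable g)
    (hfb : ∀ i x, |f i x| ≤ M) (hgb : ∀ x, |g x| ≤ M)
    (hε : Filter.Tendsto
      (fun i => sSup {r : ℝ | ∃ x y : Z, dist x y ≤ δ i ∧ |f i x - g y| = r})
      Filter.atTop (nhds 0)) :
    (∀ φ : Z → ℝ, Continuous φ →
      Filter.Tendsto (fun i => ∫ x, φ x * f i x ∂(μs i)) Filter.atTop
        (nhds (∫ x, φ x * g x ∂μ))) ∧
    Filter.Tendsto (fun i => ∫ x, (f i x) ^ 2 ∂(μs i)) Filter.atTop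
      (nhds (∫ x, (g x) ^ 2 ∂μ)) := by
  have hπuniv : ∀ i, π i Set.univ = μ Set.univ := by
    intro i
    rw [← hπ2 i, Measure.map_apply measurable_snd MeasurableSet.univ, Set.preimage_univ]
  by_cases hμ0 : μ = 0
  · have hπ0 : ∀ i, π i = 0 := fun i =>
      Measure.measure_univ_eq_zero.mp (by rw [hπuniv i, hμ0]; simp)
    have hμs0 : ∀ i, μs i = 0 := fun i => by rw [← hπ1 i, hπ0 i, Measure.map_zero]
    constructor
    · intro φ hφ
      simp only [hμs0, hμ0, integral_zero_measure]
      exact tendsto_const_nhds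
    · simp only [hμs0, hμ0, integral_zero_measure]
      exact tendsto_const_nhds
  -- main case
  haveI : ∀ i, IsFiniteMeasure (π i) := fun i =>
    ⟨by rw [hπuniv i]; exact measure_lt_top μ _⟩
  have hπne : ∀ i, π i ≠ 0 := by
    intro i h
    apply hμ0
    apply Measure.measure_univ_eq_zero.mp
    rw [← hπuniv i, h]; simp
  haveI : ∀ i, (ae (π i)).NeBot := fun i => ae_neBot.mpr (hπne i)
  set ε : ℕ → ℝ := fun i => sSup {r : ℝ | ∃ x y : Z, dist x y ≤ δ i ∧ |f i x - g y| = r}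
    with hεdef
  have hεle : ∀ i x y, dist x y ≤ δ i → |f i x - g y| ≤ ε i := by
    intro i x y hxy
    apply le_csSup
    · refine ⟨2 * M, ?_⟩
      rintro r ⟨a, b, -, rfl⟩
      calc |f i a - g b| ≤ |f i a| + |g b| := abs_sub _ _
        _ ≤ M + M := add_le_add (hfb i a) (hgb b)
        _ = 2 * M := by ring
    · exact ⟨x, y, hxy, rfl⟩
  have hε0 : ∀ i, 0 ≤ ε i := by
    intro i
    apply Real.sSup_nonneg
    rintro r ⟨a, b, -, rfl⟩
    exact abs_nonneg _
  set V : ℝ := (μ Set.univ).toReal with hVdef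
  have hV : ∀ i, ((π i) Set.univ).toReal ≤ V := fun i => by rw [hπuniv i]
  constructor
  · intro φ hφ
    obtain ⟨B0, hB0⟩ := isCompact_univ.exists_bound_of_continuousOn hφ.continuousOn
    set B : ℝ := max B0 0 with hBdef
    have hB0' : 0 ≤ B := le_max_right _ _
    have hBφ : ∀ x, |φ x| ≤ B := fun x =>
      le_trans (hB0 x (mem_univ x)) (le_max_left _ _)
    set ω : ℕ → ℝ := fun i => sSup {r : ℝ | ∃ x y : Z, dist x y ≤ δ i ∧ |φ x - φ y| = r}
      with hωdef
    have hωle : ∀ i x y, dist x y ≤ δ i → |φ x - φ y| ≤ ω i := by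
      intro i x y hxy
      apply le_csSup
      · refine ⟨2 * B, ?_⟩
        rintro r ⟨a, b, -, rfl⟩
        calc |φ a - φ b| ≤ |φ a| + |φ b| := abs_sub _ _
          _ ≤ B + B := add_le_add (hBφ a) (hBφ b)
          _ = 2 * B := by ring
      · exact ⟨x, y, hxy, rfl⟩
    have hω0 : ∀ i, 0 ≤ ω i := by
      intro i
      apply Real.sSup_nonneg
      rintro r ⟨a, b, -, rfl⟩
      exact abs_nonneg _
    have hω : Tendsto ω atTop (nhds 0) := by
      rw [Metric.tendsto_atTop]
      intro η hη
      have huc : UniformContinuous φ := CompactSpace.uniformContinuous_of_continuous hφ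
      obtain ⟨d, hd, hdφ⟩ := Metric.uniformContinuous_iff.mp huc (η / 2) (by linarith)
      have hev : ∀ᶠ i in atTop, δ i < d := hδ.eventually_lt_const hd
      obtain ⟨N, hN⟩ := eventually_atTop.mp hev
      refine ⟨N, fun n hn => ?_⟩
      have : ω n ≤ η / 2 := by
        apply Real.sSup_le
        · rintro r ⟨a, b, hab, rfl⟩
          exact le_of_lt (hdφ (lt_of_le_of_lt hab (hN n hn)))
        · linarith
      rw [Real.dist_eq, sub_zero, abs_of_nonneg (hω0 n)]
      linarith
    -- integrability
    have hint1 : ∀ i, Integrable (fun p : Z × Z => φ p.1 * f i p.1) (π i) := by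
      intro i
      apply Integrable.mono' (integrable_const (B * M))
        ((hφ.measurable.comp measurable_fst).mul ((hfm i).comp measurable_fst)).aestronglyMeasurable
      filter_upwards with p
      rw [Real.norm_eq_abs, Pi.mul_apply, abs_mul]
      exact mul_le_mul (hBφ p.1) (hfb i p.1) (abs_nonneg _) hB0'
    have hint2 : ∀ i, Integrable (fun p : Z × Z => φ p.2 * g p.2) (π i) := by
      intro i
      apply Integrable.mono' (integrable_const (B * M))
        ((hφ.measurable.comp measurable_snd).mul (hgm.comp measurable_snd)).aestronglyMeasurable
      filter_upwards with p
      rw [Real.norm_eq_abs, Pi.mul_apply, abs_mul]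
      exact mul_le_mul (hBφ p.2) (hgb p.2) (abs_nonneg _) hB0'
    have h1 : ∀ i, ∫ x, φ x * f i x ∂(μs i) = ∫ p : Z × Z, φ p.1 * f i p.1 ∂(π i) := by
      intro i
      rw [← hπ1 i, integral_map measurable_fst.aemeasurable]
      exact (hφ.measurable.mul (hfm i)).aestronglyMeasurable
    have h2 : ∀ i, ∫ x, φ x * g x ∂μ = ∫ p : Z × Z, φ p.2 * g p.2 ∂(π i) := by
      intro i
      rw [← hπ2 i, integral_map measurable_snd.aemeasurable]
      exact (hφ.measurable.mul hgm).aestronglyMeasurable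
    have key : Tendsto
        (fun i => ∫ p : Z × Z, (φ p.1 * f i p.1 - φ p.2 * g p.2) ∂(π i)) atTop (nhds 0) := by
      apply aux_tendsto_integral_zero π hV _ (fun i => B * ε i + M * ω i)
      · intro i
        have := hε0 i; have := hω0 i
        nlinarith
      · have := (hε.const_mul B).add (hω.const_mul M)
        simpa using this
      · intro i
        filter_upwards [hae i] with p hp
        have heq : φ p.1 * f i p.1 - φ p.2 * g p.2
            = φ p.1 * (f i p.1 - g p.2) + (φ p.1 - φ p.2) * g p.2 := by ring
        rw [Real.norm_eq_abs, heq]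
        calc |φ p.1 * (f i p.1 - g p.2) + (φ p.1 - φ p.2) * g p.2|
            ≤ |φ p.1 * (f i p.1 - g p.2)| + |(φ p.1 - φ p.2) * g p.2| := abs_add_le _ _
          _ = |φ p.1| * |f i p.1 - g p.2| + |φ p.1 - φ p.2| * |g p.2| := by
              rw [abs_mul, abs_mul]
          _ ≤ B * ε i + ω i * M :=
              add_le_add (mul_le_mul (hBφ p.1) (hεle i p.1 p.2 hp) (abs_nonneg _) hB0')
                (mul_le_mul (hωle i p.1 p.2 hp) (hgb p.2) (abs_nonneg _) (hω0 i))
          _ = B * ε i + M * ω i := by ring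
    have heq : (fun i => ∫ x, φ x * f i x ∂(μs i))
        = fun i => (∫ p : Z × Z, (φ p.1 * f i p.1 - φ p.2 * g p.2) ∂(π i))
            + ∫ x, φ x * g x ∂μ := by
      funext i
      rw [h1 i, h2 i, integral_sub (hint1 i) (hint2 i)]
      ring
    rw [heq]
    simpa using key.add_const (∫ x, φ x * g x ∂μ)
  · -- squares
    have hint1 : ∀ i, Integrable (fun p : Z × Z => (f i p.1) ^ 2) (π i) := by
      intro i
      apply Integrable.mono' (integrable_const (M ^ 2))
        (((hfm i).comp measurable_fst).pow_const 2).aestronglyMeasurable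
      filter_upwards with p
      rw [Real.norm_eq_abs, abs_pow]
      exact pow_le_pow_left₀ (abs_nonneg _) (hfb i p.1) 2
    have hint2 : ∀ i, Integrable (fun p : Z × Z => (g p.2) ^ 2) (π i) := by
      intro i
      apply Integrable.mono' (integrable_const (M ^ 2))
        ((hgm.comp measurable_snd).pow_const 2).aestronglyMeasurable
      filter_upwards with p
      rw [Real.norm_eq_abs, abs_pow]
      exact pow_le_pow_left₀ (abs_nonneg _) (hgb p.2) 2
    have h1 : ∀ i, ∫ x, (f i x) ^ 2 ∂(μs i) = ∫ p : Z × Z, (f i p.1) ^ 2 ∂(π i) := by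
      intro i
      rw [← hπ1 i, integral_map measurable_fst.aemeasurable]
      exact ((hfm i).pow_const 2).aestronglyMeasurable
    have h2 : ∀ i, ∫ x, (g x) ^ 2 ∂μ = ∫ p : Z × Z, (g p.2) ^ 2 ∂(π i) := by
      intro i
      rw [← hπ2 i, integral_map measurable_snd.aemeasurable]
      exact (hgm.pow_const 2).aestronglyMeasurable
    have key : Tendsto
        (fun i => ∫ p : Z × Z, ((f i p.1) ^ 2 - (g p.2) ^ 2) ∂(π i)) atTop (nhds 0) := by
      apply aux_tendsto_integral_zero π hV _ (fun i => 2 * M * ε i)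
      · intro i
        have := hε0 i
        nlinarith
      · simpa using hε.const_mul (2 * M)
      · intro i
        filter_upwards [hae i] with p hp
        have heq : (f i p.1) ^ 2 - (g p.2) ^ 2
            = (f i p.1 - g p.2) * (f i p.1 + g p.2) := by ring
        rw [Real.norm_eq_abs, heq, abs_mul]
        have hsum : |f i p.1 + g p.2| ≤ 2 * M := by
          calc |f i p.1 + g p.2| ≤ |f i p.1| + |g p.2| := abs_add_le _ _
            _ ≤ M + M := add_le_add (hfb i p.1) (hgb p.2)
            _ = 2 * M := by ring
        calc |f i p.1 - g p.2| * |f i p.1 + g p.2| ≤ ε i * (2 * M) :=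
            mul_le_mul (hεle i p.1 p.2 hp) hsum (abs_nonneg _) (hε0 i)
          _ = 2 * M * ε i := by ring
    have heqf : (fun i => ∫ x, (f i x) ^ 2 ∂(μs i))
        = fun i => (∫ p : Z × Z, ((f i p.1) ^ 2 - (g p.2) ^ 2) ∂(π i))
            + ∫ x, (g x) ^ 2 ∂μ := by
      funext i
      rw [h1 i, h2 i, integral_sub (hint1 i) (hint2 i)]
      ring
    rw [heqf]
    simpa using key.add_const (∫ x, (g x) ^ 2 ∂μ)
end

section
/- In the ambient Hausdorff convergence setting, let L, B ≥ 0 and let f_i : X_i → ℝ^m be L-Lipschitz functions with sup_{x∈X_i} ‖f_i(x)‖ ≤ B for all i. Then there exist a subsequence (i_k) and an L-Lipschitz function f : X → ℝ^m such that f_{i_k} converges to f relative to Z. -/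
open Metric Set Filter BoundedContinuousFunction
open scoped ENNReal NNReal

set_option maxHeartbeats 1000000
set_option synthInstance.maxHeartbeats 200000

/-- **Gromov's Arzelà–Ascoli theorem.** In the ambient Hausdorff
convergence setting, uniformly bounded `L`-Lipschitz functions `f i : X i → ℝ^m` admit
a subsequence converging relative to `Z` to an `L`-Lipschitz function on `X`. -/
theorem gromov_arzela_ascoli {Z : Type*} [MetricSpace Z] [CompactSpace Z] {m : ℕ}
    (Xs : ℕ → Set Z) (X : Set Z)
    (hXsc : ∀ i, IsCompact (Xs i)) (hXsne : ∀ i, (Xs i).Nonempty)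
    (hXc : IsCompact X) (hXne : X.Nonempty)
    (hH : Filter.Tendsto (fun i => hausdorffDist (Xs i) X) Filter.atTop (nhds 0))
    (L : NNReal) (B : ℝ) (hB : 0 ≤ B)
    (f : ℕ → Z → EuclideanSpace ℝ (Fin m))
    (hLip : ∀ i, LipschitzOnWith L (f i) (Xs i))
    (hBd : ∀ i, ∀ x ∈ Xs i, ‖f i x‖ ≤ B) :
    ∃ φ : ℕ → ℕ, StrictMono φ ∧
      ∃ g : Z → EuclideanSpace ℝ (Fin m), LipschitzOnWith L g X ∧
        ∀ x ∈ X, ∀ xs : ℕ → Z, (∀ k, xs k ∈ Xs (φ k)) →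
          Filter.Tendsto (fun k => dist (xs k) x) Filter.atTop (nhds 0) →
          Filter.Tendsto (fun k => f (φ k) (xs k)) Filter.atTop (nhds (g x)) := by
  classical
  set C : NNReal := lipschitzExtensionConstant (EuclideanSpace ℝ (Fin m)) * L with hC
  -- extend each `f i` to all of `Z`
  choose F hFlip hFeq using fun i => (hLip i).extend_finite_dimension
  -- uniform bound for the extensions
  set B' : ℝ := B + (C : ℝ) * diam (univ : Set Z) with hB'
  have hFbd : ∀ i z, ‖F i z‖ ≤ B' := by
    intro i z
    obtain ⟨x0, hx0⟩ := hXsne i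
    have h1 : ‖F i z - F i x0‖ ≤ (C : ℝ) * dist z x0 := by
      simpa [dist_eq_norm, hC] using (hFlip i).dist_le_mul z x0
    have h2 : ‖F i x0‖ ≤ B := by rw [← hFeq i hx0]; exact hBd i x0 hx0
    have h3 : dist z x0 ≤ diam (univ : Set Z) :=
      dist_le_diam_of_mem isCompact_univ.isBounded (mem_univ _) (mem_univ _)
    calc ‖F i z‖ ≤ ‖F i z - F i x0‖ + ‖F i x0‖ := by
          simpa using norm_add_le (F i z - F i x0) (F i x0)
      _ ≤ (C : ℝ) * dist z x0 + B := add_le_add h1 h2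
      _ ≤ (C : ℝ) * diam (univ : Set Z) + B := by
          gcongr
      _ = B' := by rw [hB']; ring
  -- bundle the extensions as bounded continuous functions
  let Fb : ℕ → (Z →ᵇ EuclideanSpace ℝ (Fin m)) := fun i =>
    BoundedContinuousFunction.mkOfCompact ⟨F i, (hFlip i).continuous⟩
  have hFb : ∀ i z, Fb i z = F i z := fun i z => rfl
  -- Arzelà–Ascoli: the closure of the range of `Fb` is compact
  have hcomp : IsCompact (closure (range Fb)) := by
    refine BoundedContinuousFunction.arzela_ascoli (closedBall (0 : EuclideanSpace ℝ (Fin m)) B')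
      (isCompact_closedBall _ _) (range Fb) ?_ ?_
    · rintro h z ⟨i, rfl⟩
      simpa [mem_closedBall, dist_eq_norm, hFb] using hFbd i z
    · refine Metric.equicontinuous_of_continuity_modulus (fun t => (C : ℝ) * t) ?_ _ ?_
      · have : Filter.Tendsto (fun t : ℝ => (C : ℝ) * t) (nhds 0) (nhds ((C : ℝ) * 0)) :=
          (tendsto_id.const_mul _)
        simpa using this
      · rintro x y ⟨h, hh⟩
        obtain ⟨i, rfl⟩ := hh
        exact (hFlip i).dist_le_mul x y
  -- extract a uniformly convergent subsequence
  obtain ⟨gb, -, φ, hφ, hconv⟩ :=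
    hcomp.tendsto_subseq (x := Fb) (fun n => subset_closure (mem_range_self n))
  refine ⟨φ, hφ, gb, ?_, ?_⟩
  -- auxiliary: the key convergence statement (proved first)
  swap
  · intro x hx xs hxs hxsx
    rw [tendsto_iff_dist_tendsto_zero]
    have hle : ∀ k, dist (f (φ k) (xs k)) (gb x)
        ≤ dist (Fb (φ k)) gb + dist (gb (xs k)) (gb x) := by
      intro k
      have h1 : f (φ k) (xs k) = Fb (φ k) (xs k) := hFeq (φ k) (hxs k)
      calc dist (f (φ k) (xs k)) (gb x)
          ≤ dist (f (φ k) (xs k)) (gb (xs k)) + dist (gb (xs k)) (gb x) :=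
            dist_triangle _ _ _
        _ ≤ dist (Fb (φ k)) gb + dist (gb (xs k)) (gb x) := by
            rw [h1]
            exact add_le_add (BoundedContinuousFunction.dist_coe_le_dist _) le_rfl
    refine squeeze_zero (fun k => dist_nonneg) hle ?_
    have h2 : Filter.Tendsto (fun k => dist (Fb (φ k)) gb) atTop (nhds 0) :=
      tendsto_iff_dist_tendsto_zero.1 hconv
    have hxsx' : Filter.Tendsto xs atTop (nhds x) := by
      rw [tendsto_iff_dist_tendsto_zero]; exact hxsx
    have h3 : Filter.Tendsto (fun k => dist (gb (xs k)) (gb x)) atTop (nhds 0) := by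
      have : Filter.Tendsto (fun k => gb (xs k)) atTop (nhds (gb x)) :=
        (gb.continuous.tendsto x).comp hxsx'
      exact tendsto_iff_dist_tendsto_zero.1 this
    simpa using h2.add h3
  · -- Lipschitz property of the limit on `X`
    -- first record the convergence statement proven above (re-derive it)
    have key : ∀ x ∈ X, ∀ xs : ℕ → Z, (∀ k, xs k ∈ Xs (φ k)) →
        Filter.Tendsto (fun k => dist (xs k) x) atTop (nhds 0) →
        Filter.Tendsto (fun k => f (φ k) (xs k)) atTop (nhds (gb x)) := by
      intro x hx xs hxs hxsx
      rw [tendsto_iff_dist_tendsto_zero]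
      have hle : ∀ k, dist (f (φ k) (xs k)) (gb x)
          ≤ dist (Fb (φ k)) gb + dist (gb (xs k)) (gb x) := by
        intro k
        have h1 : f (φ k) (xs k) = Fb (φ k) (xs k) := hFeq (φ k) (hxs k)
        calc dist (f (φ k) (xs k)) (gb x)
            ≤ dist (f (φ k) (xs k)) (gb (xs k)) + dist (gb (xs k)) (gb x) :=
              dist_triangle _ _ _
          _ ≤ dist (Fb (φ k)) gb + dist (gb (xs k)) (gb x) := by
              rw [h1]
              exact add_le_add (BoundedContinuousFunction.dist_coe_le_dist _) le_rfl
      refine squeeze_zero (fun k => dist_nonneg) hle ?_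
      have h2 : Filter.Tendsto (fun k => dist (Fb (φ k)) gb) atTop (nhds 0) :=
        tendsto_iff_dist_tendsto_zero.1 hconv
      have hxsx' : Filter.Tendsto xs atTop (nhds x) := by
        rw [tendsto_iff_dist_tendsto_zero]; exact hxsx
      have h3 : Filter.Tendsto (fun k => dist (gb (xs k)) (gb x)) atTop (nhds 0) := by
        have : Filter.Tendsto (fun k => gb (xs k)) atTop (nhds (gb x)) :=
          (gb.continuous.tendsto x).comp hxsx'
        exact tendsto_iff_dist_tendsto_zero.1 this
      simpa using h2.add h3
    -- build approximating sequences in the `Xs (φ k)`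
    have happrox : ∀ x ∈ X, ∃ p : ℕ → Z, (∀ k, p k ∈ Xs (φ k)) ∧
        Filter.Tendsto (fun k => dist (p k) x) atTop (nhds 0) := by
      intro x hx
      have hchoice : ∀ k, ∃ p ∈ Xs (φ k), infDist x (Xs (φ k)) = dist x p := fun k =>
        (hXsc (φ k)).exists_infDist_eq_dist (hXsne (φ k)) x
      choose p hp hpd using hchoice
      refine ⟨p, hp, ?_⟩
      have hne : ∀ i, EMetric.hausdorffEdist X (Xs i) ≠ ⊤ := fun i =>
        hausdorffEdist_ne_top_of_nonempty_of_bounded hXne (hXsne i)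
          hXc.isBounded (hXsc i).isBounded
      have hbound : ∀ k, dist (p k) x ≤ hausdorffDist (Xs (φ k)) X := by
        intro k
        have := infDist_le_hausdorffDist_of_mem (s := X) (t := Xs (φ k)) hx (hne (φ k))
        rw [hpd k] at this
        rwa [hausdorffDist_comm, dist_comm]
      have hH' : Filter.Tendsto (fun k => hausdorffDist (Xs (φ k)) X) atTop (nhds 0) :=
        hH.comp hφ.tendsto_atTop
      exact squeeze_zero (fun k => dist_nonneg) hbound hH'
    intro x hx y hy
    obtain ⟨p, hp, hpx⟩ := happrox x hx
    obtain ⟨q, hq, hqy⟩ := happrox y hy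
    have hgx : Filter.Tendsto (fun k => f (φ k) (p k)) atTop (nhds (gb x)) :=
      key x hx p hp hpx
    have hgy : Filter.Tendsto (fun k => f (φ k) (q k)) atTop (nhds (gb y)) :=
      key y hy q hq hqy
    have hdist : Filter.Tendsto (fun k => dist (f (φ k) (p k)) (f (φ k) (q k))) atTop
        (nhds (dist (gb x) (gb y))) := hgx.dist hgy
    have hrhs : Filter.Tendsto (fun k => (L : ℝ) * dist (p k) (q k)) atTop
        (nhds ((L : ℝ) * dist x y)) := by
      have hpx' : Filter.Tendsto p atTop (nhds x) := by
        rw [tendsto_iff_dist_tendsto_zero]; exact hpx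
      have hqy' : Filter.Tendsto q atTop (nhds y) := by
        rw [tendsto_iff_dist_tendsto_zero]; exact hqy
      exact (hpx'.dist hqy').const_mul _
    have hle : dist (gb x) (gb y) ≤ (L : ℝ) * dist x y := by
      refine le_of_tendsto_of_tendsto' hdist hrhs fun k => ?_
      exact (hLip (φ k)).dist_le_mul _ (hp k) _ (hq k)
    rw [edist_dist, edist_dist]
    calc ENNReal.ofReal (dist (gb x) (gb y)) ≤ ENNReal.ofReal ((L : ℝ) * dist x y) :=
          ENNReal.ofReal_le_ofReal hle
      _ = (L : ℝ≥0∞) * ENNReal.ofReal (dist x y) := by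
          rw [ENNReal.ofReal_mul (by positivity)]
          simp
end

section
/- Let X be a geodesic metric space, Ω ⊂ X open, δ > 0, and x ∈ ∂Ω. Suppose there exist r ≥ δ and p ∈ X with d(x,p) = r and {z ∈ X : d(z,p) < r} ⊂ Ω (an inner ball touching at x), and there exist r' ≥ δ and q ∈ X with d(x,q) = r' and {z ∈ X : d(z,q) < r'} ⊂ X∖Ω (an outer ball touching at x). Then there exists a unit-speed geodesic γ:[−δ,δ]→X with γ(0) = x, γ(t) ∈ Ω for all t ∈ [−δ,0), and γ(t) ∈ int(X∖Ω) for all t ∈ (0,δ]. -/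
open Metric Set

/-- In a geodesic space, if a boundary point `x ∈ ∂Ω` is touched by an
inner ball of radius `r ≥ δ` and an outer ball of radius `r' ≥ δ`, then there is a
unit-speed geodesic `γ : [-δ,δ] → X` with `γ 0 = x`, `γ t ∈ Ω` for `t ∈ [-δ,0)` and
`γ t ∈ int(Ωᶜ)` for `t ∈ (0,δ]`. -/
theorem geodesic_through_two_sided_ball_point {X : Type*} [MetricSpace X]
    (hgeo : ∀ x y : X, ∃ γ : ℝ → X, γ 0 = x ∧ γ (dist x y) = y ∧
      ∀ s ∈ Set.Icc (0:ℝ) (dist x y), ∀ t ∈ Set.Icc (0:ℝ) (dist x y),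
        dist (γ s) (γ t) = |s - t|)
    (Ω : Set X) (hΩ : IsOpen Ω) (δ : ℝ) (hδ : 0 < δ)
    (x : X) (hx : x ∈ frontier Ω)
    (r : ℝ) (hr : δ ≤ r) (p : X) (hp : dist x p = r) (hin : Metric.ball p r ⊆ Ω)
    (r' : ℝ) (hr' : δ ≤ r') (q : X) (hq : dist x q = r')
    (hout : Metric.ball q r' ⊆ Ωᶜ) :
    ∃ γ : ℝ → X,
      (∀ s ∈ Set.Icc (-δ) δ, ∀ t ∈ Set.Icc (-δ) δ, dist (γ s) (γ t) = |s - t|) ∧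
      γ 0 = x ∧
      (∀ t ∈ Set.Ico (-δ) (0:ℝ), γ t ∈ Ω) ∧
      ∀ t ∈ Set.Ioc (0:ℝ) δ, γ t ∈ interior Ωᶜ := by
  have hrpos : 0 < r := hδ.trans_le hr
  have hr'pos : 0 < r' := hδ.trans_le hr'
  obtain ⟨γ₁, h10, h1r, h1d⟩ := hgeo p x
  obtain ⟨γ₂, h20, h2r, h2d⟩ := hgeo x q
  have hpx : dist p x = r := by rw [dist_comm]; exact hp
  rw [hpx] at h1r h1d
  rw [hq] at h2r h2d
  -- the two balls are disjoint, forcing dist p q = r + r'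
  have hpq : dist p q = r + r' := by
    refine le_antisymm ((dist_triangle p x q).trans (by rw [hpx, hq])) ?_
    by_contra h
    push_neg at h
    obtain ⟨σ, hs0, hsd, hsd'⟩ := hgeo p q
    set d := dist p q with hd
    have hdnn : 0 ≤ d := dist_nonneg
    have hsum : 0 < r + r' := by linarith
    set t := d * r / (r + r') with ht
    have ht0 : 0 ≤ t := by positivity
    have htd : t ≤ d := by
      rw [ht, div_le_iff₀ hsum]; nlinarith
    have htr : t < r := by
      rw [ht, div_lt_iff₀ hsum]; nlinarith
    have hkey : (d - t) * (r + r') = d * r' := by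
      rw [ht]; field_simp; ring
    have htr' : d - t < r' := by nlinarith
    have hσ0t : dist (σ t) p = t := by
      have := hsd' 0 ⟨le_refl 0, hdnn⟩ t ⟨ht0, htd⟩
      rw [hs0] at this
      rw [dist_comm, this, abs_of_nonpos (by linarith)]; ring
    have hσtd : dist (σ t) q = d - t := by
      have := hsd' t ⟨ht0, htd⟩ d ⟨hdnn, le_refl d⟩
      rw [hsd] at this
      rw [this, abs_of_nonpos (by linarith)]; ring
    have hmem1 : σ t ∈ Ω := hin (by rw [mem_ball, hσ0t]; exact htr)
    have hmem2 : σ t ∈ Ωᶜ := hout (by rw [mem_ball, hσtd]; exact htr')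
    exact hmem2 hmem1
  -- mixed distance estimate for the concatenation
  have hmix : ∀ s ∈ Icc (-δ) 0, ∀ t ∈ Icc (0:ℝ) δ,
      dist (γ₁ (s + r)) (γ₂ t) = t - s := by
    intro s hs t ht
    have hs1 : s + r ∈ Icc (0:ℝ) r := ⟨by linarith [hs.1], by linarith [hs.2]⟩
    have ht2 : t ∈ Icc (0:ℝ) r' := ⟨ht.1, by linarith [ht.2]⟩
    have h1 : dist (γ₁ (s + r)) x = -s := by
      have := h1d (s + r) hs1 r ⟨hrpos.le, le_refl r⟩
      rw [h1r] at this
      rw [this, abs_of_nonpos (by linarith [hs.2])]; ring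
    have h2 : dist x (γ₂ t) = t := by
      have := h2d 0 ⟨le_refl 0, hr'pos.le⟩ t ht2
      rw [h20] at this
      rw [this, abs_of_nonpos (by linarith [ht.1])]; ring
    have hub : dist (γ₁ (s + r)) (γ₂ t) ≤ t - s := by
      have := dist_triangle (γ₁ (s + r)) x (γ₂ t)
      rw [h1, h2] at this; linarith
    have h3 : dist p (γ₁ (s + r)) = s + r := by
      have := h1d 0 ⟨le_refl 0, hrpos.le⟩ (s + r) hs1
      rw [h10] at this
      rw [this, abs_of_nonpos (by linarith [hs1.1])]; ring
    have h4 : dist (γ₂ t) q = r' - t := by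
      have := h2d t ht2 r' ⟨hr'pos.le, le_refl r'⟩
      rw [h2r] at this
      rw [this, abs_of_nonpos (by linarith [ht2.2])]; ring
    have hlb : t - s ≤ dist (γ₁ (s + r)) (γ₂ t) := by
      have := dist_triangle4 p (γ₁ (s + r)) (γ₂ t) q
      rw [hpq, h3, h4] at this; linarith
    linarith
  refine ⟨fun t => if t ≤ 0 then γ₁ (t + r) else γ₂ t, ?_, ?_, ?_, ?_⟩
  · intro s hs t ht
    rcases le_or_gt s 0 with hsle | hslt <;> rcases le_or_gt t 0 with htle | htlt
    · simp only [if_pos hsle, if_pos htle]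
      have h1 : s + r ∈ Icc (0:ℝ) r := ⟨by linarith [hs.1], by linarith⟩
      have h2 : t + r ∈ Icc (0:ℝ) r := ⟨by linarith [ht.1], by linarith⟩
      rw [h1d (s + r) h1 (t + r) h2]
      ring_nf
    · simp only [if_pos hsle, if_neg (not_le.mpr htlt)]
      rw [hmix s ⟨hs.1, hsle⟩ t ⟨htlt.le, ht.2⟩,
        abs_of_nonpos (by linarith)]
      ring
    · simp only [if_neg (not_le.mpr hslt), if_pos htle]
      rw [dist_comm, hmix t ⟨ht.1, htle⟩ s ⟨hslt.le, hs.2⟩,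
        abs_of_nonneg (by linarith)]
    · simp only [if_neg (not_le.mpr hslt), if_neg (not_le.mpr htlt)]
      exact h2d s ⟨hslt.le, by linarith [hs.2]⟩ t ⟨htlt.le, by linarith [ht.2]⟩
  · simp only [if_pos (le_refl (0:ℝ)), zero_add, h1r]
  · intro t ht
    simp only [if_pos ht.2.le]
    have h1 : t + r ∈ Icc (0:ℝ) r := ⟨by linarith [ht.1], by linarith [ht.2]⟩
    have : dist (γ₁ (t + r)) p = t + r := by
      have := h1d 0 ⟨le_refl 0, hrpos.le⟩ (t + r) h1
      rw [h10] at this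
      rw [dist_comm, this, abs_of_nonpos (by linarith [h1.1])]; ring
    exact hin (by rw [mem_ball, this]; linarith [ht.2])
  · intro t ht
    simp only [if_neg (not_le.mpr ht.1)]
    have h2 : t ∈ Icc (0:ℝ) r' := ⟨ht.1.le, by linarith [ht.2]⟩
    have : dist (γ₂ t) q = r' - t := by
      have := h2d t h2 r' ⟨hr'pos.le, le_refl r'⟩
      rw [h2r] at this
      rw [this, abs_of_nonpos (by linarith [h2.2])]; ring
    exact interior_maximal hout isOpen_ball (by rw [mem_ball, this]; linarith [ht.1])
end
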